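/- arXiv:2511.03286 — 6 statements merged into one kernel-verified Lean document; each statement's English description precedes it below -/
import Mathlib

section
/- In the grassroots social network protocol, the Sync transaction preserves the prefix invariant: if before a Sync over {p,q} the sequence of posts of agent r recorded at p is a prefix of the sequence recorded at r's own state (and similarly for q), then the same holds after the Sync. -/
/-- One side of the grassroots Sync: for each agent `r` recorded by both `f` and `g`,
`f`'s record is updated to the longer of the two records. -/
def osync {Agent M : Type*} (f g : Agent → Option (List M)) :
    Agent → Option (List M) :=
  fun r => match f r, g r with
    | some s, some s' => if s.length < s'.length then some s' else some s
    | x, _ => x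

/-- In the grassroots social network protocol, the Sync transaction over
`{p, q}` preserves the prefix invariant: if before the Sync every record of any agent
`r`'s posts is a prefix of `r`'s own record (and any two records of `r`'s posts are
prefix-comparable), then after the Sync every record of `r`'s posts is still a prefix
of `r`'s own record. Here `c a r` is agent `a`'s record of agent `r`'s posts. -/
theorem grassroots_sync_preserves_prefix {Agent M : Type*} [DecidableEq Agent]
    (c : Agent → Agent → Option (List M)) (p q : Agent) (hpq : p ≠ q)
    (hInv : ∀ a r (s s' : List M), c a r = some s → c r r = some s' → s <+: s')
    (hComp : ∀ a b r (s s' : List M), c a r = some s → c b r = some s' →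
      s <+: s' ∨ s' <+: s) :
    ∀ a r (s s' : List M),
      Function.update (Function.update c p (osync (c p) (c q))) q
          (osync (c q) (c p)) a r = some s →
      Function.update (Function.update c p (osync (c p) (c q))) q
          (osync (c q) (c p)) r r = some s' →
      s <+: s' := by

  intro a r s s' h1 h2
  have hself : ∀ (x : Agent), osync (c r) (c x) r = c r r := by
    intro x
    unfold osync
    cases hrr : c r r with
    | none => cases hx : c x r <;> simp
    | some t =>
      cases hx : c x r with
      | none => simp
      | some u =>
        have hle := (hInv x r u t hx hrr).length_le
        simp [Nat.not_lt.mpr hle]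
  have h2' : c r r = some s' := by
    by_cases hq : r = q
    · subst hq
      rw [Function.update_self, hself p] at h2
      exact h2
    · rw [Function.update_of_ne hq] at h2
      by_cases hp : r = p
      · subst hp
        rw [Function.update_self, hself q] at h2
        exact h2
      · rwa [Function.update_of_ne hp] at h2
  have hos : ∀ x y : Agent, osync (c x) (c y) r = some s → s <+: s' := by
    intro x y h
    unfold osync at h
    cases hx : c x r with
    | none => cases hy : c y r <;> simp [hx, hy] at h
    | some t =>
      cases hy : c y r with
      | none =>
        simp [hx, hy] at h
        subst h
        exact hInv x r t s' hx h2'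
      | some u =>
        simp [hx, hy] at h
        split_ifs at h <;> injection h with h <;> subst h
        · exact hInv y r u s' hy h2'
        · exact hInv x r t s' hx h2'
  by_cases haq : a = q
  · rw [haq, Function.update_self] at h1
    exact hos q p h1
  · rw [Function.update_of_ne haq] at h1
    by_cases hap : a = p
    · rw [hap, Function.update_self] at h1
      exact hos p q h1
    · rw [Function.update_of_ne hap] at h1
      exact hInv a r s s' h1 h2'
end

section
/- In the grassroots social network protocol, an agent's own posts sequence is monotonically nondecreasing under the prefix order along any run: if configuration c' is reachable from c and (p, s) ∈ c_p, (p, s') ∈ c'_p, then s is a prefix of s'. -/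
/-- Configurations of the grassroots social network: each agent's local state is a
set of pairs (agent, posts). -/
abbrev GConf (Agent M : Type*) := Agent → Set (Agent × List M)

/-- The effect of Sync on one side: each record also held by the other side is
updated to the longer of the two records. -/
def gsync {Agent M : Type*} (Sp Sq : Set (Agent × List M)) : Set (Agent × List M) :=
  {x | (x ∈ Sp ∧ ∀ s' : List M, (x.1, s') ∈ Sq → ¬ (x.2.length < s'.length)) ∨
       (x ∈ Sq ∧ ∃ s : List M, (x.1, s) ∈ Sp ∧ s.length < x.2.length)}

/-- Transitions of the grassroots social network protocol. -/
inductive GStep {Agent M : Type*} [DecidableEq Agent] :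
    GConf Agent M → GConf Agent M → Prop
  | initialise (c : GConf Agent M) (p : Agent) (h : c p = ∅) :
      GStep c (Function.update c p {(p, ([] : List M))})
  | post (c : GConf Agent M) (p : Agent) (m : M) (s : List M) (h : (p, s) ∈ c p) :
      GStep c (Function.update c p ((c p \ {(p, s)}) ∪ {(p, s ++ [m])}))
  | follow (c : GConf Agent M) (p q : Agent) (hpq : p ≠ q)
      (h : ∀ s : List M, (q, s) ∉ c p) :
      GStep c (Function.update c p (c p ∪ {(q, ([] : List M))}))
  | sync (c : GConf Agent M) (p q : Agent) (hpq : p ≠ q) :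
      GStep c (Function.update (Function.update c p (gsync (c p) (c q))) q
        (gsync (c q) (c p)))

/-- Reachable configurations: those occurring in runs from the initial configuration
where every agent starts at `∅`. -/
def GReachable {Agent M : Type*} [DecidableEq Agent] (c : GConf Agent M) : Prop :=
  Relation.ReflTransGen GStep (fun _ => (∅ : Set (Agent × List M))) c

namespace GAux

variable {Agent M : Type*} [DecidableEq Agent]

/-- Invariant: every copy of `p`'s record anywhere is a prefix of `p`'s own record,
and if `p` is uninitialised all copies of its record are empty. -/
def Inv (c : GConf Agent M) : Prop :=
  (∀ p q t s, (p, t) ∈ c q → (p, s) ∈ c p → t <+: s) ∧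
  (∀ p q t, (p, t) ∈ c q → c p = ∅ → t = [])

lemma mem_gsync {Sp Sq : Set (Agent × List M)} {x : Agent × List M}
    (h : x ∈ gsync Sp Sq) : x ∈ Sp ∨ x ∈ Sq := by
  rcases h with ⟨h, -⟩ | ⟨h, -⟩
  · exact Or.inl h
  · exact Or.inr h

lemma gsync_nonempty {Sp Sq : Set (Agent × List M)} {x : Agent × List M}
    (hx : x ∈ Sp) : (gsync Sp Sq).Nonempty := by
  by_cases hc : ∃ s', (x.1, s') ∈ Sq ∧ x.2.length < s'.length
  · obtain ⟨s', hs', hl⟩ := hc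
    exact ⟨(x.1, s'), Or.inr ⟨hs', ⟨x.2, hx, hl⟩⟩⟩
  · push_neg at hc
    exact ⟨x, Or.inl ⟨hx, fun s' h => not_lt.mpr (hc s' h)⟩⟩

lemma inv_unique {c : GConf Agent M} (hI : Inv c) {p : Agent} {s s' : List M}
    (h1 : (p, s) ∈ c p) (h2 : (p, s') ∈ c p) : s = s' :=
  (hI.1 p p s s' h1 h2).sublist.eq_of_length_le (hI.1 p p s' s h2 h1).length_le

lemma inv_empty : Inv (fun _ => (∅ : Set (Agent × List M)) : GConf Agent M) := by
  constructor
  · intro p q t s ht; exact absurd ht (Set.notMem_empty _)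
  · intro p q t ht; exact absurd ht (Set.notMem_empty _)

lemma inv_step {c c' : GConf Agent M} (hI : Inv c) (hs : GStep c c') : Inv c' := by
  obtain ⟨h1, h2⟩ := hI
  cases hs with
  | initialise r hr =>
    constructor
    · intro p q t s ht hsp
      by_cases hp : p = r
      · subst hp
        rw [Function.update_self] at hsp
        have hs0 : s = [] := by simpa using hsp
        have ht0 : t = [] := by
          rw [Function.update_apply] at ht
          split_ifs at ht with hq
          · simpa using ht
          · exact h2 p q t ht hr
        rw [hs0, ht0]
      · rw [Function.update_of_ne hp] at hsp
        rw [Function.update_apply] at ht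
        split_ifs at ht with hq
        · exact absurd (by simpa using ht : p = r ∧ t = []).1 hp
        · exact h1 p q t s ht hsp
    · intro p q t ht hpe
      by_cases hp : p = r
      · subst hp
        rw [Function.update_self] at hpe
        exact absurd hpe (by simp)
      · rw [Function.update_of_ne hp] at hpe
        rw [Function.update_apply] at ht
        split_ifs at ht with hq
        · exact absurd (by simpa using ht : p = r ∧ t = []).1 hp
        · exact h2 p q t ht hpe
  | post r m s0 h0 =>
    constructor
    · intro p q t s ht hsp
      by_cases hp : p = r
      · subst hp
        rw [Function.update_self] at hsp
        have hs' : s = s0 ++ [m] := by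
          rcases hsp with ⟨hmem, hne⟩ | hseq
          · exact absurd (by simp [inv_unique ⟨h1, h2⟩ hmem h0]) hne
          · simpa using hseq
        rw [Function.update_apply] at ht
        split_ifs at ht with hq
        · rcases ht with ⟨hmem, hne⟩ | hteq
          · exact absurd (by simp [inv_unique ⟨h1, h2⟩ hmem h0]) hne
          · rw [hs', (by simpa using hteq : t = s0 ++ [m])]
        · have := h1 p q t s0 ht h0
          rw [hs']
          exact this.trans (List.prefix_append _ _)
      · rw [Function.update_of_ne hp] at hsp
        rw [Function.update_apply] at ht
        split_ifs at ht with hq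
        · rcases ht with ⟨hmem, -⟩ | hteq
          · exact h1 p r t s hmem hsp
          · exact absurd (by simpa using hteq : p = r ∧ t = s0 ++ [m]).1 hp
        · exact h1 p q t s ht hsp
    · intro p q t ht hpe
      by_cases hp : p = r
      · subst hp
        rw [Function.update_self] at hpe
        have : (p, s0 ++ [m]) ∈ (∅ : Set (Agent × List M)) := by
          rw [← hpe]; exact Or.inr rfl
        exact absurd this (Set.notMem_empty _)
      · rw [Function.update_of_ne hp] at hpe
        rw [Function.update_apply] at ht
        split_ifs at ht with hq
        · rcases ht with ⟨hmem, -⟩ | hteq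
          · exact h2 p r t hmem hpe
          · exact absurd (by simpa using hteq : p = r ∧ t = s0 ++ [m]).1 hp
        · exact h2 p q t ht hpe
  | follow r r' hrr' hn =>
    have hown : ∀ p (s : List M), (p, s) ∈ Function.update c r (c r ∪ {(r', [])}) p →
        (p, s) ∈ c p := by
      intro p s hsp
      rw [Function.update_apply] at hsp
      split_ifs at hsp with hp
      · rcases hsp with hmem | hseq
        · exact hp ▸ hmem
        · exact absurd (hp.symm.trans (by simpa using hseq : p = r' ∧ s = []).1) hrr'
      · exact hsp
    constructor
    · intro p q t s ht hsp
      have hsp' := hown p s hsp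
      rw [Function.update_apply] at ht
      split_ifs at ht with hq
      · rcases ht with hmem | hteq
        · exact h1 p r t s hmem hsp'
        · rw [(by simpa using hteq : p = r' ∧ t = []).2]; exact List.nil_prefix
      · exact h1 p q t s ht hsp'
    · intro p q t ht hpe
      by_cases hp : p = r
      · subst hp
        rw [Function.update_self] at hpe
        have hmem : ((r' : Agent), ([] : List M)) ∈ (∅ : Set (Agent × List M)) := by
          rw [← hpe]; exact Or.inr rfl
        exact absurd hmem (Set.notMem_empty _)
      · rw [Function.update_of_ne hp] at hpe
        rw [Function.update_apply] at ht
        split_ifs at ht with hq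
        · rcases ht with hmem | hteq
          · exact h2 p r t hmem hpe
          · obtain ⟨hpr, hte⟩ := (by simpa using hteq : p = r' ∧ t = [])
            exact hte
        · exact h2 p q t ht hpe
  | sync p0 q0 hpq =>
    set c' := Function.update (Function.update c p0 (gsync (c p0) (c q0))) q0
        (gsync (c q0) (c p0)) with hc'
    have e1 : c' q0 = gsync (c q0) (c p0) := Function.update_self _ _ _
    have e2 : c' p0 = gsync (c p0) (c q0) := by
      rw [hc', Function.update_of_ne hpq, Function.update_self]
    have e3 : ∀ a, a ≠ p0 → a ≠ q0 → c' a = c a := by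
      intro a ha1 ha2
      rw [hc', Function.update_of_ne ha2, Function.update_of_ne ha1]
    have hall : ∀ (q : Agent) (x : Agent × List M), x ∈ c' q → ∃ b, x ∈ c b := by
      intro q x hx
      by_cases hq1 : q = p0
      · subst hq1; rw [e2] at hx
        rcases mem_gsync hx with h | h
        · exact ⟨q, h⟩
        · exact ⟨q0, h⟩
      by_cases hq2 : q = q0
      · subst hq2; rw [e1] at hx
        rcases mem_gsync hx with h | h
        · exact ⟨q, h⟩
        · exact ⟨p0, h⟩
      · rw [e3 q hq1 hq2] at hx; exact ⟨q, hx⟩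
    have hown : ∀ (p : Agent) (s : List M), (p, s) ∈ c' p → (p, s) ∈ c p := by
      intro p s hsp
      by_cases hp1 : p = p0
      · subst hp1; rw [e2] at hsp
        rcases hsp with ⟨hmem, -⟩ | ⟨hmem, s1, hs1, hl⟩
        · exact hmem
        · exact absurd ((h1 p q0 s s1 hmem hs1).length_le) (not_le.mpr hl)
      by_cases hp2 : p = q0
      · subst hp2; rw [e1] at hsp
        rcases hsp with ⟨hmem, -⟩ | ⟨hmem, s1, hs1, hl⟩
        · exact hmem
        · exact absurd ((h1 p p0 s s1 hmem hs1).length_le) (not_le.mpr hl)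
      · rw [e3 p hp1 hp2] at hsp; exact hsp
    constructor
    · intro p q t s ht hsp
      obtain ⟨b, htb⟩ := hall q (p, t) ht
      exact h1 p b t s htb (hown p s hsp)
    · intro p q t ht hpe
      have hpe' : c p = ∅ := by
        by_contra hne
        obtain ⟨x, hx⟩ := Set.nonempty_iff_ne_empty.mpr hne
        by_cases hp1 : p = p0
        · subst hp1
          obtain ⟨y, hy⟩ := gsync_nonempty (Sq := c q0) hx
          rw [← e2] at hy
          exact Set.notMem_empty y (hpe ▸ hy)
        by_cases hp2 : p = q0
        · subst hp2
          obtain ⟨y, hy⟩ := gsync_nonempty (Sq := c p0) hx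
          rw [← e1] at hy
          exact Set.notMem_empty y (hpe ▸ hy)
        · rw [e3 p hp1 hp2] at hpe
          exact Set.notMem_empty x (hpe ▸ hx)
      obtain ⟨b, htb⟩ := hall q (p, t) ht
      exact h2 p b t htb hpe'

lemma inv_reachable {c : GConf Agent M} (hc : GReachable c) : Inv c := by
  induction hc with
  | refl => exact inv_empty
  | tail _ hbc ih => exact inv_step ih hbc

lemma own_step {c c' : GConf Agent M} (hI : Inv c) (hs : GStep c c') {p : Agent}
    {s : List M} (h : (p, s) ∈ c p) : ∃ t, (p, t) ∈ c' p ∧ s <+: t := by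
  obtain ⟨h1, h2⟩ := hI
  cases hs with
  | initialise r hr =>
    have hp : p ≠ r := by rintro rfl; rw [hr] at h; exact Set.notMem_empty _ h
    exact ⟨s, by rw [Function.update_of_ne hp]; exact h, List.prefix_refl s⟩
  | post r m s0 h0 =>
    by_cases hp : p = r
    · subst hp
      have hss0 : s = s0 := inv_unique ⟨h1, h2⟩ h h0
      subst hss0
      exact ⟨s ++ [m], by rw [Function.update_self]; exact Or.inr rfl,
        List.prefix_append _ _⟩
    · exact ⟨s, by rw [Function.update_of_ne hp]; exact h, List.prefix_refl s⟩
  | follow r r' hrr' hn =>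
    by_cases hp : p = r
    · subst hp
      exact ⟨s, by rw [Function.update_self]; exact Or.inl h, List.prefix_refl s⟩
    · exact ⟨s, by rw [Function.update_of_ne hp]; exact h, List.prefix_refl s⟩
  | sync p0 q0 hpq =>
    refine ⟨s, ?_, List.prefix_refl s⟩
    by_cases hp1 : p = p0
    · subst hp1
      rw [Function.update_of_ne hpq, Function.update_self]
      exact Or.inl ⟨h, fun s' hs' => not_lt.mpr (h1 p q0 s' s hs' h).length_le⟩
    by_cases hp2 : p = q0
    · subst hp2
      rw [Function.update_self]
      exact Or.inl ⟨h, fun s' hs' => not_lt.mpr (h1 p p0 s' s hs' h).length_le⟩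
    · rw [Function.update_of_ne hp2, Function.update_of_ne hp1]
      exact h

end GAux

/-- In the grassroots social network protocol, an agent's own posts
sequence is monotonically nondecreasing under the prefix order along any run: if `c`
is reachable and `c'` is reachable from `c`, with `(p, s) ∈ c p` and
`(p, s') ∈ c' p`, then `s` is a prefix of `s'`. -/
theorem grassroots_own_posts_monotone {Agent M : Type*} [DecidableEq Agent]
    (c c' : GConf Agent M) (hc : GReachable c)
    (h : Relation.ReflTransGen GStep c c') (p : Agent) (s s' : List M)
    (hs : (p, s) ∈ c p) (hs' : (p, s') ∈ c' p) : s <+: s' := by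
  have key : ∀ d, Relation.ReflTransGen GStep c d →
      GAux.Inv d ∧ ∃ t, (p, t) ∈ d p ∧ s <+: t := by
    intro d hd
    induction hd with
    | refl => exact ⟨GAux.inv_reachable hc, s, hs, List.prefix_refl s⟩
    | tail hab hbc ih =>
      obtain ⟨hIb, t, htb, hst⟩ := ih
      obtain ⟨t', ht', htt'⟩ := GAux.own_step hIb hbc htb
      exact ⟨GAux.inv_step hIb hbc, t', ht', hst.trans htt'⟩
  obtain ⟨hI', t, ht, hst⟩ := key c' h
  exact hst.trans (hI'.1 p p t s' ht hs')
end

section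
/- In the centralised social network protocol, for any reachable configuration, for every user q the server's recorded posts of q form a prefix of q's own posts, and for every user p following q, p's recorded posts of q form a prefix of the server's recorded posts of q; hence p's view of q is a prefix of q's actual posts (safety of Follower Correctness). -/
/-- Configurations: each agent's local state is a set of feeds (agent, posts). -/
abbrev CConf (Agent M : Type*) := Agent → Set (Agent × List M)

/-- Server-side effect of Sync with user `q`: the server's record of `q` is extended
with `q`'s posts missing from it (i.e. updated to the longer of the server's record
and `q`'s own record); all other feeds are unchanged. -/
def csyncServer {Agent M : Type*} (q : Agent) (Ss Sq : Set (Agent × List M)) :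
    Set (Agent × List M) :=
  {x | (x ∈ Ss ∧ (x.1 = q → ∀ s' : List M, (q, s') ∈ Sq → ¬ (x.2.length < s'.length))) ∨
       (x.1 = q ∧ x ∈ Sq ∧ ∃ s : List M, (q, s) ∈ Ss ∧ s.length < x.2.length)}

/-- Transitions of the centralised social network protocol with server `p0`. -/
inductive CStep {Agent M : Type*} [DecidableEq Agent] (p0 : Agent) :
    CConf Agent M → CConf Agent M → Prop
  | register (c : CConf Agent M) (q : Agent) (hq : q ≠ p0) (h : c q = ∅) :
      CStep p0 c (Function.update (Function.update c q {(q, ([] : List M))}) p0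
        (c p0 ∪ {(q, ([] : List M))}))
  | post (c : CConf Agent M) (q : Agent) (hq : q ≠ p0) (m : M) (s : List M)
      (h : (q, s) ∈ c q) :
      CStep p0 c (Function.update c q ((c q \ {(q, s)}) ∪ {(q, s ++ [m])}))
  | follow (c : CConf Agent M) (q q' : Agent) (hq : q ≠ p0) (hne : c q ≠ ∅)
      (h : ∀ s : List M, (q', s) ∉ c q) :
      CStep p0 c (Function.update c q (c q ∪ {(q', ([] : List M))}))
  | sync (c : CConf Agent M) (q : Agent) (hq : q ≠ p0)
      (hreg : ∃ s : List M, (q, s) ∈ c p0) :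
      CStep p0 c (Function.update
        (Function.update c p0 (csyncServer q (c p0) (c q))) q
        (gsync (c q) (csyncServer q (c p0) (c q))))

/-- Reachable configurations of the centralised protocol. -/
def CReachable {Agent M : Type*} [DecidableEq Agent] (p0 : Agent)
    (c : CConf Agent M) : Prop :=
  Relation.ReflTransGen (CStep p0) (fun _ => (∅ : Set (Agent × List M))) c

set_option linter.unusedSectionVars false

section Inv
variable {Agent M : Type*} [DecidableEq Agent]

/-- Strengthened invariant. -/
structure CInv (p0 : Agent) (c : CConf Agent M) : Prop where
  uniq : ∀ p q (s s' : List M), (q, s) ∈ c p → (q, s') ∈ c p → s = s'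
  reg : ∀ r, r ≠ p0 → (∃ s : List M, (r, s) ∈ c p0) → c r ≠ ∅
  own : ∀ a, a ≠ p0 → c a ≠ ∅ → ∃ s : List M, (a, s) ∈ c a
  srv : ∀ p, p ≠ p0 → ∀ q, q ≠ p → ∀ s : List M, (q, s) ∈ c p → s ≠ [] →
    ∃ s' : List M, (q, s') ∈ c p0
  A : ∀ q, q ≠ p0 → ∀ s s' : List M, (q, s) ∈ c p0 → (q, s') ∈ c q → s <+: s'
  B : ∀ p, p ≠ p0 → ∀ q, q ≠ p → ∀ s s' : List M, (q, s) ∈ c p → (q, s') ∈ c p0 → s <+: s'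

lemma cinv_init (p0 : Agent) : CInv p0 (fun _ => (∅ : Set (Agent × List M))) := by
  constructor <;> intro _ <;> simp_all [Set.mem_empty_iff_false]

lemma cstep_inv {p0 : Agent} {c c' : CConf Agent M}
    (hc : CInv p0 c) (h : CStep p0 c c') : CInv p0 c' := by
  obtain ⟨U, G, I, H, A, B⟩ := hc
  cases h with
  | register a ha hemp =>
    -- c' p0 = c p0 ∪ {(a,[])}; c' a = {(a,[])}; else unchanged
    have hG' : ∀ s : List M, (a, s) ∉ c p0 := fun s hs => G a ha ⟨s, hs⟩ hemp
    have memS : ∀ r : Agent, ∀ s : List M,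
        (r, s) ∈ (c p0 ∪ {(a, ([] : List M))} : Set (Agent × List M)) ↔
        (r, s) ∈ c p0 ∨ (r = a ∧ s = []) := by
      intro r s
      simp only [Set.mem_union, Set.mem_singleton_iff, Prod.mk.injEq]
    constructor
    · intro p q s s' hs hs'
      rcases eq_or_ne p p0 with rfl | hp
      · rw [Function.update_self, memS] at hs hs'
        rcases hs with hs | ⟨hq1, hs2⟩ <;> rcases hs' with hs' | ⟨hq1', hs2'⟩
        · exact U p q s s' hs hs'
        · exact absurd (hq1' ▸ hs) (hG' s)
        · exact absurd (hq1 ▸ hs') (hG' s')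
        · rw [hs2, hs2']
      · rw [Function.update_of_ne hp] at hs hs'
        rcases eq_or_ne p a with rfl | hpa
        · rw [Function.update_self] at hs hs'
          simp only [Set.mem_singleton_iff, Prod.mk.injEq] at hs hs'
          rw [hs.2, hs'.2]
        · rw [Function.update_of_ne hpa] at hs hs'
          exact U p q s s' hs hs'
    · intro r hr hex
      rw [Function.update_self] at hex
      rcases eq_or_ne r a with rfl | hra
      · rw [Function.update_of_ne hr, Function.update_self]
        simp
      · rw [Function.update_of_ne hr, Function.update_of_ne hra]
        obtain ⟨s, hs⟩ := hex
        rw [memS] at hs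
        rcases hs with hs | ⟨hq1, _⟩
        · exact G r hr ⟨s, hs⟩
        · exact absurd hq1 hra
    · intro b hb hbne
      rcases eq_or_ne b a with rfl | hba
      · rw [Function.update_of_ne hb, Function.update_self]
        exact ⟨[], rfl⟩
      · rw [Function.update_of_ne hb, Function.update_of_ne hba] at *
        exact I b hb hbne
    · intro p hp q hqp s hs hsne
      rw [Function.update_of_ne hp] at hs
      rw [Function.update_self]
      rcases eq_or_ne p a with rfl | hpa
      · rw [Function.update_self] at hs
        simp only [Set.mem_singleton_iff, Prod.mk.injEq] at hs
        exact absurd hs.1 hqp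
      · rw [Function.update_of_ne hpa] at hs
        obtain ⟨s', hs'⟩ := H p hp q hqp s hs hsne
        exact ⟨s', Or.inl hs'⟩
    · intro q hq s s' hs hs'
      rw [Function.update_self, memS] at hs
      rw [Function.update_of_ne hq] at hs'
      rcases eq_or_ne q a with rfl | hqa
      · rw [Function.update_self] at hs'
        simp only [Set.mem_singleton_iff, Prod.mk.injEq] at hs'
        rw [hs'.2]
        rcases hs with hs | ⟨_, hs2⟩
        · exact absurd hs (hG' s)
        · rw [hs2]
      · rw [Function.update_of_ne hqa] at hs'
        rcases hs with hs | ⟨hq1, _⟩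
        · exact A q hq s s' hs hs'
        · exact absurd hq1 hqa
    · intro p hp q hqp s s' hs hs'
      rw [Function.update_of_ne hp] at hs
      rw [Function.update_self, memS] at hs'
      rcases eq_or_ne p a with rfl | hpa
      · rw [Function.update_self] at hs
        simp only [Set.mem_singleton_iff, Prod.mk.injEq] at hs
        exact absurd hs.1 hqp
      · rw [Function.update_of_ne hpa] at hs
        rcases hs' with hs' | ⟨hq1, hs2'⟩
        · exact B p hp q hqp s s' hs hs'
        · have hs0 : s = [] := by
            by_contra hne2
            obtain ⟨t, ht⟩ := H p hp q hqp s hs hne2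
            exact G a ha ⟨t, hq1 ▸ ht⟩ hemp
          rw [hs0]
          exact List.nil_prefix
  | post a ha m s0 h0 =>
    have upd : ∀ b : Agent, b ≠ a →
        Function.update c a ((c a \ {(a, s0)}) ∪ {(a, s0 ++ [m])}) b = c b :=
      fun b hb => Function.update_of_ne hb _ _
    have memA : ∀ s : List M, ∀ r : Agent,
        (r, s) ∈ Function.update c a ((c a \ {(a, s0)}) ∪ {(a, s0 ++ [m])}) a ↔
        ((r, s) ∈ c a ∧ ¬(r = a ∧ s = s0)) ∨ (r = a ∧ s = s0 ++ [m]) := by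
      intro s r
      rw [Function.update_self]
      simp only [Set.mem_union, Set.mem_diff, Set.mem_singleton_iff, Prod.mk.injEq]
    constructor
    · intro p q s s' hs hs'
      rcases eq_or_ne p a with rfl | hpa
      · rw [memA] at hs hs'
        rcases hs with ⟨hs, hns⟩ | ⟨hq1, hs2⟩ <;> rcases hs' with ⟨hs', hns'⟩ | ⟨hq1', hs2'⟩
        · exact U p q s s' hs hs'
        · exact absurd ⟨hq1', U p q s s0 hs (hq1' ▸ h0)⟩ hns
        · exact absurd ⟨hq1, U p q s' s0 hs' (hq1 ▸ h0)⟩ hns'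
        · rw [hs2, hs2']
      · rw [upd p hpa] at hs hs'
        exact U p q s s' hs hs'
    · intro r hr hex
      rw [upd p0 (Ne.symm ha)] at hex
      rcases eq_or_ne r a with rfl | hra
      · rw [Function.update_self]
        intro hcon
        have hmem : ((r : Agent), s0 ++ [m]) ∈ (c r \ {(r, s0)} ∪ {(r, s0 ++ [m])}) :=
          Set.mem_union_right _ rfl
        rw [hcon] at hmem
        exact hmem
      · rw [upd r hra]
        exact G r hr hex
    · intro b hb hbne
      rcases eq_or_ne b a with rfl | hba
      · exact ⟨s0 ++ [m], (memA (s0 ++ [m]) b).2 (Or.inr ⟨rfl, rfl⟩)⟩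
      · rw [upd b hba] at *
        exact I b hb hbne
    · intro p hp q hqp s hs hsne
      rw [upd p0 (Ne.symm ha)]
      rcases eq_or_ne p a with rfl | hpa
      · rw [memA] at hs
        rcases hs with ⟨hs, _⟩ | ⟨hq1, _⟩
        · exact H p hp q hqp s hs hsne
        · exact absurd hq1 hqp
      · rw [upd p hpa] at hs
        exact H p hp q hqp s hs hsne
    · intro q hq s s' hs hs'
      rw [upd p0 (Ne.symm ha)] at hs
      rcases eq_or_ne q a with rfl | hqa
      · rw [memA] at hs'
        rcases hs' with ⟨hs', _⟩ | ⟨_, hs2'⟩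
        · exact A q hq s s' hs hs'
        · rw [hs2']
          exact (A q hq s s0 hs h0).trans (List.prefix_append s0 [m])
      · rw [upd q hqa] at hs'
        exact A q hq s s' hs hs'
    · intro p hp q hqp s s' hs hs'
      rw [upd p0 (Ne.symm ha)] at hs'
      rcases eq_or_ne p a with rfl | hpa
      · rw [memA] at hs
        rcases hs with ⟨hs, _⟩ | ⟨hq1, _⟩
        · exact B p hp q hqp s s' hs hs'
        · exact absurd hq1 hqp
      · rw [upd p hpa] at hs
        exact B p hp q hqp s s' hs hs'
  | follow a b ha hne hnb =>
    have upd : ∀ r : Agent, r ≠ a →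
        Function.update c a (c a ∪ {(b, ([] : List M))}) r = c r :=
      fun r hr => Function.update_of_ne hr _ _
    have memA : ∀ s : List M, ∀ r : Agent,
        (r, s) ∈ Function.update c a (c a ∪ {(b, ([] : List M))}) a ↔
        (r, s) ∈ c a ∨ (r = b ∧ s = []) := by
      intro s r
      rw [Function.update_self]
      simp only [Set.mem_union, Set.mem_singleton_iff, Prod.mk.injEq]
    have hba : b ≠ a := by
      rintro rfl
      obtain ⟨t, ht⟩ := I b ha hne
      exact hnb t ht
    constructor
    · intro p q s s' hs hs'
      rcases eq_or_ne p a with rfl | hpa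
      · rw [memA] at hs hs'
        rcases hs with hs | ⟨hq1, hs2⟩ <;> rcases hs' with hs' | ⟨hq1', hs2'⟩
        · exact U p q s s' hs hs'
        · exact absurd hs (hq1' ▸ hnb s)
        · exact absurd hs' (hq1 ▸ hnb s')
        · rw [hs2, hs2']
      · rw [upd p hpa] at hs hs'
        exact U p q s s' hs hs'
    · intro r hr hex
      rw [upd p0 (Ne.symm ha)] at hex
      rcases eq_or_ne r a with rfl | hra
      · rw [Function.update_self]
        intro hcon
        exact hne (Set.eq_empty_of_subset_empty (hcon ▸ Set.subset_union_left))
      · rw [upd r hra]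
        exact G r hr hex
    · intro e he hene
      rcases eq_or_ne e a with rfl | hea
      · obtain ⟨t, ht⟩ := I e he hne
        exact ⟨t, (memA t e).2 (Or.inl ht)⟩
      · rw [upd e hea] at *
        exact I e he hene
    · intro p hp q hqp s hs hsne
      rw [upd p0 (Ne.symm ha)]
      rcases eq_or_ne p a with rfl | hpa
      · rw [memA] at hs
        rcases hs with hs | ⟨_, hs2⟩
        · exact H p hp q hqp s hs hsne
        · exact absurd hs2 hsne
      · rw [upd p hpa] at hs
        exact H p hp q hqp s hs hsne
    · intro q hq s s' hs hs'
      rw [upd p0 (Ne.symm ha)] at hs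
      rcases eq_or_ne q a with rfl | hqa
      · rw [memA] at hs'
        rcases hs' with hs' | ⟨hqb, hs2'⟩
        · exact A q hq s s' hs hs'
        · exact absurd hqb.symm hba
      · rw [upd q hqa] at hs'
        exact A q hq s s' hs hs'
    · intro p hp q hqp s s' hs hs'
      rw [upd p0 (Ne.symm ha)] at hs'
      rcases eq_or_ne p a with rfl | hpa
      · rw [memA] at hs
        rcases hs with hs | ⟨_, hs2⟩
        · exact B p hp q hqp s s' hs hs'
        · rw [hs2]; exact List.nil_prefix
      · rw [upd p hpa] at hs
        exact B p hp q hqp s s' hs hs'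
  | sync a ha hreg =>
    set Ss' := csyncServer a (c p0) (c a) with hSs'
    have upd : ∀ r, r ≠ a → r ≠ p0 →
        Function.update (Function.update c p0 Ss') a (gsync (c a) Ss') r = c r := by
      intro r hra hrp0
      rw [Function.update_of_ne hra, Function.update_of_ne hrp0]
    have updp0 : Function.update (Function.update c p0 Ss') a (gsync (c a) Ss') p0 = Ss' := by
      rw [Function.update_of_ne (Ne.symm ha), Function.update_self]
    have upda : Function.update (Function.update c p0 Ss') a (gsync (c a) Ss') a
        = gsync (c a) Ss' := Function.update_self _ _ _
    have memS_ne : ∀ (r : Agent) (s : List M), r ≠ a → ((r, s) ∈ Ss' ↔ (r, s) ∈ c p0) := by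
      intro r s hr
      simp only [hSs', csyncServer, Set.mem_setOf_eq]
      constructor
      · rintro (⟨h1, _⟩ | ⟨h1, _⟩)
        · exact h1
        · exact absurd h1 hr
      · intro h1
        exact Or.inl ⟨h1, fun h => absurd h hr⟩
    have memS_a : ∀ s : List M, (a, s) ∈ Ss' ↔
        ((a, s) ∈ c p0 ∧ ∀ s' : List M, (a, s') ∈ c a → ¬(s.length < s'.length)) ∨
        ((a, s) ∈ c a ∧ ∃ t : List M, (a, t) ∈ c p0 ∧ t.length < s.length) := by
      intro s
      simp only [hSs', csyncServer, Set.mem_setOf_eq]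
      constructor
      · rintro (⟨h1, h2⟩ | ⟨_, h2, h3⟩)
        · exact Or.inl ⟨h1, h2 trivial⟩
        · exact Or.inr ⟨h2, h3⟩
      · rintro (⟨h1, h2⟩ | ⟨h2, h3⟩)
        · exact Or.inl ⟨h1, fun _ => h2⟩
        · exact Or.inr ⟨trivial, h2, h3⟩
    have memG : ∀ (r : Agent) (s : List M), (r, s) ∈ gsync (c a) Ss' ↔
        ((r, s) ∈ c a ∧ ∀ s' : List M, (r, s') ∈ Ss' → ¬(s.length < s'.length)) ∨
        ((r, s) ∈ Ss' ∧ ∃ t : List M, (r, t) ∈ c a ∧ t.length < s.length) := by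
      intro r s; simp only [gsync, Set.mem_setOf_eq]
    have uS : ∀ (r : Agent) (s s' : List M), (r, s) ∈ Ss' → (r, s') ∈ Ss' → s = s' := by
      intro r s s' hs hs'
      rcases eq_or_ne r a with rfl | hra
      · rw [memS_a] at hs hs'
        rcases hs with ⟨h1, h2⟩ | ⟨h1, t, ht, hlt⟩ <;>
          rcases hs' with ⟨h1', h2'⟩ | ⟨h1', t', ht', hlt'⟩
        · exact U p0 r s s' h1 h1'
        · exact absurd hlt' ((U p0 r t' s ht' h1) ▸ h2 s' h1')
        · exact absurd hlt ((U p0 r t s' ht h1') ▸ (h2' s h1))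
        · exact U r r s s' h1 h1'
      · rw [memS_ne r s hra] at hs
        rw [memS_ne r s' hra] at hs'
        exact U p0 r s s' hs hs'
    have hSa : ∃ s : List M, (a, s) ∈ Ss' := by
      have hca := G a ha hreg
      obtain ⟨u, hu⟩ := hreg
      obtain ⟨t, ht⟩ := I a ha hca
      by_cases hlt : u.length < t.length
      · exact ⟨t, (memS_a t).2 (Or.inr ⟨ht, u, hu, hlt⟩)⟩
      · refine ⟨u, (memS_a u).2 (Or.inl ⟨hu, fun s' hs' h => ?_⟩)⟩
        rw [U a a s' t hs' ht] at h
        exact hlt h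
    have hGa : ∃ s : List M, (a, s) ∈ gsync (c a) Ss' := by
      obtain ⟨t, ht⟩ := I a ha (G a ha hreg)
      by_cases hall : ∀ s' : List M, (a, s') ∈ Ss' → ¬(t.length < s'.length)
      · exact ⟨t, (memG a t).2 (Or.inl ⟨ht, hall⟩)⟩
      · push_neg at hall
        obtain ⟨s', hs', hlt⟩ := hall
        exact ⟨s', (memG a s').2 (Or.inr ⟨hs', t, ht, hlt⟩)⟩
    constructor
    · -- uniq
      intro p q s s' hs hs'
      rcases eq_or_ne p a with rfl | hpa
      · rw [upda, memG] at hs hs'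
        rcases hs with ⟨h1, h2⟩ | ⟨h1, t, ht, hlt⟩ <;>
          rcases hs' with ⟨h1', h2'⟩ | ⟨h1', t', ht', hlt'⟩
        · exact U p q s s' h1 h1'
        · exact absurd hlt' ((U p q t' s ht' h1) ▸ h2 s' h1')
        · exact absurd hlt ((U p q t s' ht h1') ▸ h2' s h1)
        · exact uS q s s' h1 h1'
      · rcases eq_or_ne p p0 with rfl | hpp0
        · rw [updp0] at hs hs'
          exact uS q s s' hs hs'
        · rw [upd p hpa hpp0] at hs hs'
          exact U p q s s' hs hs'
    · -- reg
      intro r hr hex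
      rw [updp0] at hex
      rcases eq_or_ne r a with rfl | hra
      · rw [upda]
        obtain ⟨s, hs⟩ := hGa
        exact fun hcon => (hcon ▸ hs : ((r : Agent), s) ∈ (∅ : Set (Agent × List M)))
      · rw [upd r hra hr]
        obtain ⟨s, hs⟩ := hex
        rw [memS_ne r s hra] at hs
        exact G r hr ⟨s, hs⟩
    · -- own
      intro e he hene
      rcases eq_or_ne e a with rfl | hea
      · rw [upda]; exact hGa
      · rw [upd e hea he] at *
        exact I e he hene
    · -- srv
      intro p hp q hqp s hs hsne
      rw [updp0]
      have bridge : (∃ s' : List M, (q, s') ∈ c p0) → ∃ s' : List M, (q, s') ∈ Ss' := by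
        rintro ⟨s', hs'⟩
        rcases eq_or_ne q a with rfl | hqa
        · exact hSa
        · exact ⟨s', (memS_ne q s' hqa).2 hs'⟩
      rcases eq_or_ne p a with rfl | hpa
      · rw [upda, memG] at hs
        rcases hs with ⟨h1, _⟩ | ⟨h1, _⟩
        · exact bridge (H p hp q hqp s h1 hsne)
        · exact ⟨s, h1⟩
      · rw [upd p hpa hp] at hs
        exact bridge (H p hp q hqp s hs hsne)
    · -- A
      intro q hq s s' hs hs'
      rw [updp0] at hs
      rcases eq_or_ne q a with rfl | hqa
      · rw [upda, memG] at hs'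
        rcases hs' with ⟨h1', h2'⟩ | ⟨h1', t', ht', hlt'⟩
        · rw [memS_a] at hs
          rcases hs with ⟨h1, _⟩ | ⟨h1, _⟩
          · exact A q hq s s' h1 h1'
          · exact (U q q s s' h1 h1') ▸ List.prefix_refl s
        · exact (uS q s s' hs h1') ▸ List.prefix_refl s
      · rw [upd q hqa hq] at hs'
        rw [memS_ne q s hqa] at hs
        exact A q hq s s' hs hs'
    · -- B
      intro p hp q hqp s s' hs hs'
      rw [updp0] at hs'
      have hBS : ∀ u : List M, (q, u) ∈ c p → u <+: s' := by
        intro u hu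
        rcases eq_or_ne q a with rfl | hqa
        · rw [memS_a] at hs'
          rcases hs' with ⟨h1', _⟩ | ⟨h1', t', ht', hlt'⟩
          · exact B p hp q hqp u s' hu h1'
          · exact (B p hp q hqp u t' hu ht').trans (A q ha t' s' ht' h1')
        · rw [memS_ne q s' hqa] at hs'
          exact B p hp q hqp u s' hu hs'
      rcases eq_or_ne p a with rfl | hpa
      · rw [upda, memG] at hs
        rcases hs with ⟨h1, _⟩ | ⟨h1, _⟩
        · exact hBS s h1
        · exact (uS q s s' h1 hs') ▸ List.prefix_refl s
      · rw [upd p hpa hp] at hs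
        exact hBS s hs

lemma creachable_inv {p0 : Agent} {c : CConf Agent M} (h : CReachable p0 c) :
    CInv p0 c := by
  induction h with
  | refl => exact cinv_init p0
  | tail _ hstep ih => exact cstep_inv ih hstep

end Inv

/-- safety of Follower Correctness, centralised: in any reachable
configuration, for every user `q` the server's recorded posts of `q` form a prefix of
`q`'s own posts; for every user `p` following `q ≠ p`, `p`'s recorded posts of `q`
form a prefix of the server's recorded posts of `q`; hence `p`'s view of `q` is a
prefix of `q`'s actual posts. -/
theorem centralised_follower_safety {Agent M : Type*} [DecidableEq Agent]
    (p0 : Agent) (c : CConf Agent M) (h : CReachable p0 c) :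
    (∀ q : Agent, q ≠ p0 → ∀ s s' : List M,
      (q, s) ∈ c p0 → (q, s') ∈ c q → s <+: s') ∧
    (∀ p : Agent, p ≠ p0 → ∀ q : Agent, q ≠ p → ∀ s s' : List M,
      (q, s) ∈ c p → (q, s') ∈ c p0 → s <+: s') ∧
    (∀ p : Agent, p ≠ p0 → ∀ q : Agent, q ≠ p0 → q ≠ p → ∀ s s' : List M,
      (q, s) ∈ c p → (q, s') ∈ c q → s <+: s') := by
  
  obtain ⟨U, G, I, H, A, B⟩ := creachable_inv h
  refine ⟨fun q hq => A q hq, fun p hp q hqp => B p hp q hqp, ?_⟩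
  intro p hp q hq hqp s s' hs hs'
  rcases eq_or_ne s [] with rfl | hsne
  · exact List.nil_prefix
  · obtain ⟨t, ht⟩ := H p hp q hqp s hs hsne
    exact (B p hp q hqp s t hs ht).trans (A q hq t s' ht hs')
end

section
/- In the grassroots social network protocol with the fairness requirement that for any two agents p, q with (q,·) ∈ c_p a Sync over {p,q} eventually occurs, if p follows q and q has posted message m, then eventually m appears in p's record of q's posts (liveness of Follower Correctness). -/
/-- A step that is a Sync over `{p, q}`. -/
def GSyncStep {Agent M : Type*} [DecidableEq Agent]
    (c c' : GConf Agent M) (p q : Agent) : Prop :=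
  p ≠ q ∧
    c' = Function.update (Function.update c p (gsync (c p) (c q))) q
      (gsync (c q) (c p))

set_option linter.unusedSectionVars false

section Aux
variable {Agent M : Type*} [DecidableEq Agent]

/-- Functionality: each agent records at most one posts-list per agent. -/
def GFunc (c : GConf Agent M) : Prop :=
  ∀ a r s s', (r, s) ∈ c a → (r, s') ∈ c a → s = s'

/-- Dominance: any record of `r` anywhere is `[]` or a prefix of `r`'s own record. -/
def GDom (c : GConf Agent M) : Prop :=
  ∀ a r s, (r, s) ∈ c a → s = [] ∨ ∃ t, (r, t) ∈ c r ∧ s <+: t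

lemma mem_gsync_iff {Sp Sq : Set (Agent × List M)} {r : Agent} {s : List M} :
    (r, s) ∈ gsync Sp Sq ↔
      ((r, s) ∈ Sp ∧ ∀ s' : List M, (r, s') ∈ Sq → ¬ (s.length < s'.length)) ∨
      ((r, s) ∈ Sq ∧ ∃ u : List M, (r, u) ∈ Sp ∧ u.length < s.length) := Iff.rfl

lemma mem_of_mem_gsync {Sp Sq : Set (Agent × List M)} {r : Agent} {s : List M}
    (h : (r, s) ∈ gsync Sp Sq) : (r, s) ∈ Sp ∨ (r, s) ∈ Sq := by
  rcases h with ⟨h, -⟩ | ⟨h, -⟩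
  · exact Or.inl h
  · exact Or.inr h

lemma own_mem_gsync {c : GConf Agent M} (hf : GFunc c) (hd : GDom c)
    {r b : Agent} {t : List M} (h : (r, t) ∈ c r) : (r, t) ∈ gsync (c r) (c b) := by
  refine Or.inl ⟨h, fun s' hs' hlt => ?_⟩
  rcases hd b r s' hs' with rfl | ⟨t', ht', hpre⟩
  · simp at hlt
  · have hE : t' = t := hf r r t' t ht' h
    subst hE
    have h1 := hpre.length_le
    simp only [List.length] at hlt ⊢
    omega

lemma exists_mem_gsync {Sp Sq : Set (Agent × List M)} {r : Agent} {s : List M}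
    (h : (r, s) ∈ Sp) : ∃ s', (r, s') ∈ gsync Sp Sq := by
  by_cases hc : ∃ s', (r, s') ∈ Sq ∧ s.length < s'.length
  · obtain ⟨s', hs', hlt⟩ := hc
    exact ⟨s', Or.inr ⟨hs', s, h, hlt⟩⟩
  · push_neg at hc
    exact ⟨s, Or.inl ⟨h, fun s' hs' => not_lt.2 (hc s' hs')⟩⟩

lemma gsync_functional {Sp Sq : Set (Agent × List M)}
    (hp : ∀ r s s', (r, s) ∈ Sp → (r, s') ∈ Sp → s = s')
    (hq : ∀ r s s', (r, s) ∈ Sq → (r, s') ∈ Sq → s = s') :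
    ∀ r s s', (r, s) ∈ gsync Sp Sq → (r, s') ∈ gsync Sp Sq → s = s' := by
  intro r s s' hs hs'
  rcases hs with ⟨h1, h2⟩ | ⟨h1, u, hu, hlt⟩ <;>
    rcases hs' with ⟨h1', h2'⟩ | ⟨h1', u', hu', hlt'⟩
  · exact hp r s s' h1 h1'
  · have hE : s = u' := hp r s u' h1 hu'
    exact absurd (hE ▸ hlt') (h2 s' h1')
  · have hE : u = s' := hp r u s' hu h1'
    exact absurd (hE ▸ hlt) (h2' s h1)
  · exact hq r s s' h1 h1'

end Aux

section Aux2
set_option linter.unusedSectionVars false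
variable {Agent M : Type*} [DecidableEq Agent]

lemma gstep_inv {c c' : GConf Agent M} (h : GStep c c') (hf : GFunc c) (hd : GDom c) :
    GFunc c' ∧ GDom c' := by
  cases h with
  | initialise p hp =>
    constructor
    · intro a r s s' hs hs'
      by_cases ha : a = p
      · rw [ha, Function.update_self] at hs hs'
        simp only [Set.mem_singleton_iff, Prod.mk.injEq] at hs hs'
        rw [hs.2, hs'.2]
      · rw [Function.update_of_ne ha] at hs hs'
        exact hf a r s s' hs hs'
    · intro a r s hs
      by_cases ha : a = p
      · rw [ha, Function.update_self] at hs
        simp only [Set.mem_singleton_iff, Prod.mk.injEq] at hs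
        exact Or.inl hs.2
      · rw [Function.update_of_ne ha] at hs
        rcases hd a r s hs with rfl | ⟨t, ht, hpre⟩
        · exact Or.inl rfl
        · by_cases hr : r = p
          · rw [hr, hp] at ht; exact absurd ht (Set.notMem_empty _)
          · exact Or.inr ⟨t, by rwa [Function.update_of_ne hr], hpre⟩
  | post p m₀ s₀ h₀ =>
    constructor
    · intro a r s s' hs hs'
      by_cases ha : a = p
      · rw [ha, Function.update_self] at hs hs'
        simp only [Set.mem_union, Set.mem_diff, Set.mem_singleton_iff,
          Prod.mk.injEq] at hs hs'
        rcases hs with ⟨hs1, hs2⟩ | ⟨hr, hsE⟩ <;>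
          rcases hs' with ⟨hs1', hs2'⟩ | ⟨hr', hsE'⟩
        · exact hf p r s s' hs1 hs1'
        · rw [hr'] at hs1
          exact absurd ⟨hr', hf p p s s₀ hs1 h₀⟩ hs2
        · rw [hr] at hs1'
          exact absurd ⟨hr, hf p p s' s₀ hs1' h₀⟩ hs2'
        · rw [hsE, hsE']
      · rw [Function.update_of_ne ha] at hs hs'
        exact hf a r s s' hs hs'
    · intro a r s hs
      by_cases ha : a = p
      · rw [ha, Function.update_self] at hs
        simp only [Set.mem_union, Set.mem_diff, Set.mem_singleton_iff,
          Prod.mk.injEq] at hs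
        rcases hs with ⟨hs1, hs2⟩ | ⟨hr, hsE⟩
        · rcases hd p r s hs1 with rfl | ⟨t, ht, hpre⟩
          · exact Or.inl rfl
          · by_cases hr : r = p
            · rw [hr] at hs1
              exact absurd ⟨hr, hf p p s s₀ hs1 h₀⟩ hs2
            · exact Or.inr ⟨t, by rwa [Function.update_of_ne hr], hpre⟩
        · refine Or.inr ⟨s₀ ++ [m₀], ?_, hsE ▸ List.prefix_rfl⟩
          rw [hr, Function.update_self]
          exact Or.inr rfl
      · rw [Function.update_of_ne ha] at hs
        rcases hd a r s hs with rfl | ⟨t, ht, hpre⟩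
        · exact Or.inl rfl
        · by_cases hr : r = p
          · rw [hr] at ht ⊢
            have hE : t = s₀ := hf p p t s₀ ht h₀
            refine Or.inr ⟨s₀ ++ [m₀], ?_, (hE ▸ hpre).trans (List.prefix_append s₀ [m₀])⟩
            rw [Function.update_self]
            exact Or.inr rfl
          · exact Or.inr ⟨t, by rwa [Function.update_of_ne hr], hpre⟩
  | follow p q' hpq' hno =>
    constructor
    · intro a r s s' hs hs'
      by_cases ha : a = p
      · rw [ha, Function.update_self] at hs hs'
        simp only [Set.mem_union, Set.mem_singleton_iff, Prod.mk.injEq] at hs hs'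
        rcases hs with hs | ⟨hr, hsE⟩ <;> rcases hs' with hs' | ⟨hr', hsE'⟩
        · exact hf p r s s' hs hs'
        · rw [hr'] at hs
          exact absurd hs (hno s)
        · rw [hr] at hs'
          exact absurd hs' (hno s')
        · rw [hsE, hsE']
      · rw [Function.update_of_ne ha] at hs hs'
        exact hf a r s s' hs hs'
    · intro a r s hs
      have hmono : ∀ b u, ((r : Agent), (u : List M)) ∈ c b →
          (r, u) ∈ Function.update c p (c p ∪ {(q', ([] : List M))}) b := by
        intro b u hu
        by_cases hb : b = p
        · subst hb; rw [Function.update_self]; exact Or.inl hu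
        · rwa [Function.update_of_ne hb]
      by_cases ha : a = p
      · rw [ha, Function.update_self] at hs
        rcases hs with hs | hs
        · rcases hd p r s hs with rfl | ⟨t, ht, hpre⟩
          · exact Or.inl rfl
          · exact Or.inr ⟨t, hmono r t ht, hpre⟩
        · simp only [Set.mem_singleton_iff, Prod.mk.injEq] at hs
          exact Or.inl hs.2
      · rw [Function.update_of_ne ha] at hs
        rcases hd a r s hs with rfl | ⟨t, ht, hpre⟩
        · exact Or.inl rfl
        · exact Or.inr ⟨t, hmono r t ht, hpre⟩
  | sync p q' hpq' =>
    have heval : ∀ a, (Function.update (Function.update c p (gsync (c p) (c q'))) q'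
        (gsync (c q') (c p))) a =
        if a = q' then gsync (c q') (c p)
        else if a = p then gsync (c p) (c q') else c a := by
      intro a
      by_cases ha : a = q'
      · subst ha; rw [Function.update_self, if_pos rfl]
      · rw [Function.update_of_ne ha, if_neg ha]
        by_cases ha' : a = p
        · subst ha'; rw [Function.update_self, if_pos rfl]
        · rw [Function.update_of_ne ha', if_neg ha']
    constructor
    · intro a r s s' hs hs'
      rw [heval] at hs hs'
      split_ifs at hs hs' with h1 h2
      · exact gsync_functional (hf q') (hf p) r s s' hs hs'
      · exact gsync_functional (hf p) (hf q') r s s' hs hs'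
      · exact hf a r s s' hs hs'
    · intro a r s hs
      have hown : ∀ t, ((r : Agent), (t : List M)) ∈ c r →
          (r, t) ∈ (Function.update (Function.update c p (gsync (c p) (c q'))) q'
            (gsync (c q') (c p))) r := by
        intro t ht
        rw [heval]
        split_ifs with h1 h2
        · subst h1; exact own_mem_gsync hf hd ht
        · subst h2; exact own_mem_gsync hf hd ht
        · exact ht
      have hsrc : (r, s) ∈ c p ∨ (r, s) ∈ c q' ∨ (r, s) ∈ c a := by
        rw [heval] at hs
        split_ifs at hs with h1 h2
        · rcases mem_of_mem_gsync hs with h | h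
          · exact Or.inr (Or.inl h)
          · exact Or.inl h
        · rcases mem_of_mem_gsync hs with h | h
          · exact Or.inl h
          · exact Or.inr (Or.inl h)
        · exact Or.inr (Or.inr hs)
      have : s = [] ∨ ∃ t, (r, t) ∈ c r ∧ s <+: t := by
        rcases hsrc with h | h | h
        · exact hd p r s h
        · exact hd q' r s h
        · exact hd a r s h
      rcases this with rfl | ⟨t, ht, hpre⟩
      · exact Or.inl rfl
      · exact Or.inr ⟨t, hown t ht, hpre⟩

end Aux2

section Aux3
set_option linter.unusedSectionVars false
variable {Agent M : Type*} [DecidableEq Agent]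

lemma update2_eval (c : GConf Agent M) (p q a : Agent)
    (A B : Set (Agent × List M)) :
    (Function.update (Function.update c p A) q B) a =
      if a = q then B else if a = p then A else c a := by
  by_cases h1 : a = q
  · rw [h1, Function.update_self, if_pos rfl]
  · rw [Function.update_of_ne h1, if_neg h1]
    by_cases h2 : a = p
    · rw [h2, Function.update_self, if_pos rfl]
    · rw [Function.update_of_ne h2, if_neg h2]

lemma gstep_persist {c c' : GConf Agent M} (h : GStep c c') (a r : Agent)
    (hx : ∃ s, (r, s) ∈ c a) : ∃ s, (r, s) ∈ c' a := by
  obtain ⟨s, hs⟩ := hx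
  cases h with
  | initialise p hp =>
    by_cases ha : a = p
    · rw [ha, hp] at hs; exact absurd hs (Set.notMem_empty _)
    · exact ⟨s, by rwa [Function.update_of_ne ha]⟩
  | post p m₀ s₀ h₀ =>
    by_cases ha : a = p
    · rw [ha] at hs
      by_cases he : (r, s) = (p, s₀)
      · refine ⟨s₀ ++ [m₀], ?_⟩
        rw [ha, Function.update_self]
        have hr : r = p := congrArg Prod.fst he
        rw [hr]
        exact Or.inr rfl
      · refine ⟨s, ?_⟩
        rw [ha, Function.update_self]
        exact Or.inl ⟨hs, by simpa using he⟩
    · exact ⟨s, by rwa [Function.update_of_ne ha]⟩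
  | follow p q' hpq' hno =>
    by_cases ha : a = p
    · refine ⟨s, ?_⟩
      rw [ha, Function.update_self]
      exact Or.inl (by rwa [ha] at hs)
    · exact ⟨s, by rwa [Function.update_of_ne ha]⟩
  | sync p q' hpq' =>
    rw [update2_eval]
    split_ifs with h1 h2
    · exact exists_mem_gsync (by rwa [h1] at hs)
    · exact exists_mem_gsync (by rwa [h2] at hs)
    · exact ⟨s, hs⟩

lemma gstep_own_m {c c' : GConf Agent M} (h : GStep c c') (hf : GFunc c) (hd : GDom c)
    (q : Agent) (m : M) (hx : ∃ s, (q, s) ∈ c q ∧ m ∈ s) :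
    ∃ s, (q, s) ∈ c' q ∧ m ∈ s := by
  obtain ⟨s, hs, hm⟩ := hx
  cases h with
  | initialise p hp =>
    by_cases ha : q = p
    · rw [ha, hp] at hs; exact absurd hs (Set.notMem_empty _)
    · exact ⟨s, by rwa [Function.update_of_ne ha], hm⟩
  | post p m₀ s₀ h₀ =>
    by_cases ha : q = p
    · rw [ha] at hs
      by_cases he : s = s₀
      · refine ⟨s₀ ++ [m₀], ?_, ?_⟩
        · rw [ha, Function.update_self]
          exact Or.inr rfl
        · exact List.mem_append_left _ (he ▸ hm)
      · refine ⟨s, ?_, hm⟩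
        rw [ha, Function.update_self]
        refine Or.inl ⟨hs, ?_⟩
        simp only [Set.mem_singleton_iff, Prod.mk.injEq, not_and]
        intro _; exact he
    · exact ⟨s, by rwa [Function.update_of_ne ha], hm⟩
  | follow p q' hpq' hno =>
    by_cases ha : q = p
    · refine ⟨s, ?_, hm⟩
      rw [ha, Function.update_self]
      exact Or.inl (by rwa [ha] at hs)
    · exact ⟨s, by rwa [Function.update_of_ne ha], hm⟩
  | sync p q' hpq' =>
    rw [update2_eval]
    split_ifs with h1 h2
    · refine ⟨s, ?_, hm⟩
      rw [h1] at hs ⊢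
      exact own_mem_gsync hf hd hs
    · refine ⟨s, ?_, hm⟩
      rw [h2] at hs ⊢
      exact own_mem_gsync hf hd hs
    · exact ⟨s, hs, hm⟩

end Aux3

/-- In the grassroots social network protocol with the fairness
requirement that whenever `(q, ·) ∈ c p` a Sync over `{p, q}` eventually occurs,
if `p` follows `q` and `q` has posted message `m`, then eventually `m` appears in
`p`'s record of `q`'s posts (liveness of Follower Correctness). -/
theorem grassroots_liveness {Agent M : Type*} [DecidableEq Agent]
    (ρ : ℕ → GConf Agent M)
    (h0 : ρ 0 = fun _ => (∅ : Set (Agent × List M)))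
    (hstep : ∀ n, GStep (ρ n) (ρ (n + 1)))
    (hfair : ∀ n (p q : Agent), p ≠ q → (∃ s : List M, (q, s) ∈ ρ n p) →
      ∃ k, n ≤ k ∧ (GSyncStep (ρ k) (ρ (k + 1)) p q ∨ GSyncStep (ρ k) (ρ (k + 1)) q p))
    (p q : Agent) (hpq : p ≠ q) (n : ℕ) (m : M)
    (hfollow : ∃ s : List M, (q, s) ∈ ρ n p)
    (hposted : ∃ s : List M, (q, s) ∈ ρ n q ∧ m ∈ s) :
    ∃ k : ℕ, ∃ s' : List M, (q, s') ∈ ρ k p ∧ m ∈ s' := by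
  have hinv : ∀ k, GFunc (ρ k) ∧ GDom (ρ k) := by
    intro k
    induction k with
    | zero =>
      constructor
      · intro a r s s' hs _
        rw [h0] at hs; exact absurd hs (Set.notMem_empty _)
      · intro a r s hs
        rw [h0] at hs; exact absurd hs (Set.notMem_empty _)
    | succ k ih => exact gstep_inv (hstep k) ih.1 ih.2
  have hp_rec : ∀ k, n ≤ k → ∃ s, (q, s) ∈ ρ k p := by
    intro k hk
    induction k, hk using Nat.le_induction with
    | base => exact hfollow
    | succ k hk ih => exact gstep_persist (hstep k) p q ih
  have hq_rec : ∀ k, n ≤ k → ∃ s, (q, s) ∈ ρ k q ∧ m ∈ s := by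
    intro k hk
    induction k, hk using Nat.le_induction with
    | base => exact hposted
    | succ k hk ih => exact gstep_own_m (hstep k) (hinv k).1 (hinv k).2 q m ih
  obtain ⟨k, hnk, hsync⟩ := hfair n p q hpq hfollow
  have hk1 : ρ (k + 1) p = gsync (ρ k p) (ρ k q) := by
    rcases hsync with ⟨_, heq⟩ | ⟨hqp, heq⟩
    · rw [heq, update2_eval, if_neg hpq, if_pos rfl]
    · rw [heq, update2_eval, if_pos rfl]
  obtain ⟨s, hs⟩ := hp_rec k hnk
  obtain ⟨t, ht, hmt⟩ := hq_rec k hnk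
  have hpre : s = [] ∨ s <+: t := by
    rcases (hinv k).2 p q s hs with rfl | ⟨t', ht', hpre⟩
    · exact Or.inl rfl
    · have hE : t' = t := (hinv k).1 q q t' t ht' ht
      exact Or.inr (hE ▸ hpre)
  by_cases hlt : s.length < t.length
  · refine ⟨k + 1, t, ?_, hmt⟩
    rw [hk1]
    exact Or.inr ⟨ht, s, hs, hlt⟩
  · refine ⟨k, s, hs, ?_⟩
    rcases hpre with rfl | hpre
    · have ht0 : t = [] := by
        rw [← List.length_eq_zero_iff]
        simp only [List.length_nil, not_lt, Nat.le_zero] at hlt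
        exact hlt
      rw [ht0] at hmt
      simp at hmt
    · have hE : s = t :=
        hpre.sublist.eq_of_length (le_antisymm hpre.length_le (not_lt.1 hlt))
      rw [hE]; exact hmt
end

section
/- In the federated social network protocol, for every reachable configuration, every feed identifier recorded at any client p is of the form (a@s, posts) with s a server, and p's own identifier p@s (for p's home server s) is recorded at both p and s after registration. -/
/-- Configurations of the federated social network: each agent's local state is a
set of feeds `((agent, home-server), posts)`; the feed identifier `a@s` is modelled
as the pair `(a, s)`. -/
abbrev FConf (Agent M : Type*) := Agent → Set ((Agent × Agent) × List M)

/-- Client-side Sync effect: each feed record also held by the other side is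
updated to the longer posts sequence. -/
def fsync {Agent M : Type*} (S1 S2 : Set ((Agent × Agent) × List M)) :
    Set ((Agent × Agent) × List M) :=
  {x | (x ∈ S1 ∧ ∀ l' : List M, (x.1, l') ∈ S2 → ¬ (x.2.length < l'.length)) ∨
       (x ∈ S2 ∧ ∃ l : List M, (x.1, l) ∈ S1 ∧ l.length < x.2.length)}

/-- Server-side effect of a client-server Sync with client `p` homed at `s`: the
server's record of `p@s` is updated to the longer of its record and `p`'s own. -/
def fserverSync {Agent M : Type*} (p s : Agent)
    (Ss Sp : Set ((Agent × Agent) × List M)) : Set ((Agent × Agent) × List M) :=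
  {x | (x ∈ Ss ∧ (x.1 = (p, s) → ∀ l' : List M, ((p, s), l') ∈ Sp →
          ¬ (x.2.length < l'.length))) ∨
       (x.1 = (p, s) ∧ x ∈ Sp ∧ ∃ l : List M, ((p, s), l) ∈ Ss ∧ l.length < x.2.length)}

/-- Server-server Sync effect on one server: feeds homed at either server that are
recorded at both are updated to the longer posts sequence. -/
def fssSync {Agent M : Type*} (s1 s2 : Agent)
    (S1 S2 : Set ((Agent × Agent) × List M)) : Set ((Agent × Agent) × List M) :=
  {x | (x ∈ S1 ∧ ((x.1.2 = s1 ∨ x.1.2 = s2) → ∀ l' : List M, (x.1, l') ∈ S2 →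
          ¬ (x.2.length < l'.length))) ∨
       ((x.1.2 = s1 ∨ x.1.2 = s2) ∧ x ∈ S2 ∧
          ∃ l : List M, (x.1, l) ∈ S1 ∧ l.length < x.2.length)}

/-- Transitions of the federated social network with servers `SV`. -/
inductive FStep {Agent M : Type*} [DecidableEq Agent] (SV : Set Agent) :
    FConf Agent M → FConf Agent M → Prop
  | register (c : FConf Agent M) (p s : Agent) (hs : s ∈ SV) (hp : p ∉ SV)
      (h : c p = ∅) :
      FStep SV c (Function.update (Function.update c p {((p, s), ([] : List M))}) s
        (c s ∪ {((p, s), ([] : List M))}))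
  | post (c : FConf Agent M) (p s : Agent) (m : M) (l : List M) (hp : p ∉ SV)
      (h : ((p, s), l) ∈ c p) :
      FStep SV c (Function.update c p
        ((c p \ {((p, s), l)}) ∪ {((p, s), l ++ [m])}))
  | follow (c : FConf Agent M) (p q s' : Agent) (hp : p ∉ SV) (hs' : s' ∈ SV)
      (hne : c p ≠ ∅) (h : ∀ l : List M, ((q, s'), l) ∉ c p) :
      FStep SV c (Function.update c p (c p ∪ {((q, s'), ([] : List M))}))
  | syncCS (c : FConf Agent M) (p s : Agent) (hp : p ∉ SV) (hs : s ∈ SV)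
      (hreg : ∃ l : List M, ((p, s), l) ∈ c s) :
      FStep SV c (Function.update
        (Function.update c s (fserverSync p s (c s) (c p))) p
        (fsync (c p) (fserverSync p s (c s) (c p))))
  | syncSS (c : FConf Agent M) (s1 s2 : Agent) (h1 : s1 ∈ SV) (h2 : s2 ∈ SV)
      (hne : s1 ≠ s2) :
      FStep SV c (Function.update
        (Function.update c s1 (fssSync s1 s2 (c s1) (c s2))) s2
        (fssSync s1 s2 (c s2) (c s1)))

/-- Reachable configurations of the federated protocol. -/
def FReachable {Agent M : Type*} [DecidableEq Agent] (SV : Set Agent)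
    (c : FConf Agent M) : Prop :=
  Relation.ReflTransGen (FStep SV) (fun _ => (∅ : Set ((Agent × Agent) × List M))) c

section Aux

variable {Agent M : Type*}

lemma fsync_exists (S1 S2 : Set ((Agent × Agent) × List M))
    (fid : Agent × Agent) (l : List M) (h : (fid, l) ∈ S1) :
    ∃ l', (fid, l') ∈ fsync S1 S2 := by
  by_cases hex : ∃ l', (fid, l') ∈ S2 ∧ l.length < l'.length
  · obtain ⟨l', h2, hl⟩ := hex
    exact ⟨l', Or.inr ⟨h2, l, h, hl⟩⟩
  · push_neg at hex
    exact ⟨l, Or.inl ⟨h, fun l' h2 => not_lt.mpr (hex l' h2)⟩⟩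

lemma fsync_fid {S1 S2 : Set ((Agent × Agent) × List M)}
    {x : (Agent × Agent) × List M} (h : x ∈ fsync S1 S2) :
    ∃ l, (x.1, l) ∈ S1 := by
  rcases h with ⟨h1, _⟩ | ⟨_, l, hl, _⟩
  · exact ⟨x.2, h1⟩
  · exact ⟨l, hl⟩

lemma fserverSync_exists (p s : Agent) (Ss Sp : Set ((Agent × Agent) × List M))
    (fid : Agent × Agent) (l : List M) (h : (fid, l) ∈ Ss) :
    ∃ l', (fid, l') ∈ fserverSync p s Ss Sp := by
  by_cases hfid : fid = (p, s)
  · subst hfid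
    by_cases hex : ∃ l', ((p, s), l') ∈ Sp ∧ l.length < l'.length
    · obtain ⟨l', h2, hl⟩ := hex
      exact ⟨l', Or.inr ⟨rfl, h2, l, h, hl⟩⟩
    · push_neg at hex
      exact ⟨l, Or.inl ⟨h, fun _ l' h2 => not_lt.mpr (hex l' h2)⟩⟩
  · exact ⟨l, Or.inl ⟨h, fun hc => absurd hc hfid⟩⟩

lemma fssSync_exists (s1 s2 : Agent) (S1 S2 : Set ((Agent × Agent) × List M))
    (fid : Agent × Agent) (l : List M) (h : (fid, l) ∈ S1) :
    ∃ l', (fid, l') ∈ fssSync s1 s2 S1 S2 := by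
  by_cases hc : fid.2 = s1 ∨ fid.2 = s2
  · by_cases hex : ∃ l', (fid, l') ∈ S2 ∧ l.length < l'.length
    · obtain ⟨l', h2, hl⟩ := hex
      exact ⟨l', Or.inr ⟨hc, h2, l, h, hl⟩⟩
    · push_neg at hex
      exact ⟨l, Or.inl ⟨h, fun _ l' h2 => not_lt.mpr (hex l' h2)⟩⟩
  · exact ⟨l, Or.inl ⟨h, fun h' => absurd h' hc⟩⟩

lemma finv_step [DecidableEq Agent] (SV : Set Agent) (c c' : FConf Agent M)
    (hstep : FStep SV c c')
    (ihA : ∀ p, p ∉ SV → ∀ x ∈ c p, x.1.2 ∈ SV)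
    (ihB : ∀ p, p ∉ SV → (c p).Nonempty →
      ∃ s ∈ SV, (∃ l : List M, ((p, s), l) ∈ c p) ∧
        ∃ l' : List M, ((p, s), l') ∈ c s) :
    (∀ p, p ∉ SV → ∀ x ∈ c' p, x.1.2 ∈ SV) ∧
    (∀ p, p ∉ SV → (c' p).Nonempty →
      ∃ s ∈ SV, (∃ l : List M, ((p, s), l) ∈ c' p) ∧
        ∃ l' : List M, ((p, s), l') ∈ c' s) := by
  cases hstep with
  | register p s hs hp h =>
    have hps : p ≠ s := fun he => hp (he ▸ hs)
    constructor
    · intro p0 hp0 x hx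
      have h1 : p0 ≠ s := fun he => hp0 (he ▸ hs)
      rw [Function.update_of_ne h1] at hx
      by_cases h2 : p0 = p
      · subst h2
        rw [Function.update_self] at hx
        rw [Set.mem_singleton_iff] at hx
        subst hx
        exact hs
      · rw [Function.update_of_ne h2] at hx
        exact ihA p0 hp0 x hx
    · intro p0 hp0 hne
      have h1 : p0 ≠ s := fun he => hp0 (he ▸ hs)
      by_cases h2 : p0 = p
      · subst h2
        refine ⟨s, hs, ⟨[], ?_⟩, ⟨[], ?_⟩⟩
        · rw [Function.update_of_ne h1, Function.update_self]
          exact rfl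
        · rw [Function.update_self]
          exact Or.inr rfl
      · rw [Function.update_of_ne h1, Function.update_of_ne h2] at hne
        obtain ⟨s0, hs0, ⟨l, hl⟩, ⟨l', hl'⟩⟩ := ihB p0 hp0 hne
        have hs0p : s0 ≠ p := fun he => hp (he ▸ hs0)
        refine ⟨s0, hs0, ⟨l, ?_⟩, ?_⟩
        · rw [Function.update_of_ne h1, Function.update_of_ne h2]
          exact hl
        · by_cases h3 : s0 = s
          · subst h3
            rw [Function.update_self]
            exact ⟨l', Or.inl hl'⟩
          · rw [Function.update_of_ne h3, Function.update_of_ne hs0p]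
            exact ⟨l', hl'⟩
  | post p s m l hp h =>
    constructor
    · intro p0 hp0 x hx
      by_cases h2 : p0 = p
      · subst h2
        rw [Function.update_self] at hx
        rcases hx with ⟨hx, _⟩ | hx
        · exact ihA p0 hp0 x hx
        · rw [Set.mem_singleton_iff] at hx
          subst hx
          exact ihA p0 hp0 ((p0, s), l) h
      · rw [Function.update_of_ne h2] at hx
        exact ihA p0 hp0 x hx
    · intro p0 hp0 hne
      by_cases h2 : p0 = p
      · subst h2
        obtain ⟨s0, hs0, ⟨l0, hl0⟩, ⟨l', hl'⟩⟩ := ihB p0 hp0 ⟨_, h⟩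
        have hs0p : s0 ≠ p0 := fun he => hp0 (he ▸ hs0)
        refine ⟨s0, hs0, ?_, ?_⟩
        · rw [Function.update_self]
          by_cases h3 : ((p0, s0), l0) = ((p0, s), l)
          · have hss : s0 = s := by simpa using congrArg (fun y => y.1.2) h3
            subst hss
            exact ⟨l ++ [m], Or.inr rfl⟩
          · exact ⟨l0, Or.inl ⟨hl0, h3⟩⟩
        · rw [Function.update_of_ne hs0p]
          exact ⟨l', hl'⟩
      · rw [Function.update_of_ne h2] at hne
        obtain ⟨s0, hs0, ⟨l0, hl0⟩, ⟨l', hl'⟩⟩ := ihB p0 hp0 hne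
        have hs0p : s0 ≠ p := fun he => hp (he ▸ hs0)
        refine ⟨s0, hs0, ⟨l0, ?_⟩, ⟨l', ?_⟩⟩
        · rw [Function.update_of_ne h2]; exact hl0
        · rw [Function.update_of_ne hs0p]; exact hl'
  | follow p q s' hp hs' hne0 h =>
    constructor
    · intro p0 hp0 x hx
      by_cases h2 : p0 = p
      · subst h2
        rw [Function.update_self] at hx
        rcases hx with hx | hx
        · exact ihA p0 hp0 x hx
        · rw [Set.mem_singleton_iff] at hx
          subst hx
          exact hs'
      · rw [Function.update_of_ne h2] at hx
        exact ihA p0 hp0 x hx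
    · intro p0 hp0 _
      by_cases h2 : p0 = p
      · subst h2
        obtain ⟨s0, hs0, ⟨l0, hl0⟩, ⟨l', hl'⟩⟩ :=
          ihB p0 hp0 (Set.nonempty_iff_ne_empty.mpr hne0)
        have hs0p : s0 ≠ p0 := fun he => hp0 (he ▸ hs0)
        refine ⟨s0, hs0, ⟨l0, ?_⟩, ⟨l', ?_⟩⟩
        · rw [Function.update_self]; exact Or.inl hl0
        · rw [Function.update_of_ne hs0p]; exact hl'
      · rename_i hne
        rw [Function.update_of_ne h2] at hne
        obtain ⟨s0, hs0, ⟨l0, hl0⟩, ⟨l', hl'⟩⟩ := ihB p0 hp0 hne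
        have hs0p : s0 ≠ p := fun he => hp (he ▸ hs0)
        refine ⟨s0, hs0, ⟨l0, ?_⟩, ⟨l', ?_⟩⟩
        · rw [Function.update_of_ne h2]; exact hl0
        · rw [Function.update_of_ne hs0p]; exact hl'
  | syncCS p s hp hs hreg =>
    have hps : p ≠ s := fun he => hp (he ▸ hs)
    constructor
    · intro p0 hp0 x hx
      have h1 : p0 ≠ s := fun he => hp0 (he ▸ hs)
      by_cases h2 : p0 = p
      · subst h2
        rw [Function.update_self] at hx
        obtain ⟨l0, hl0⟩ := fsync_fid hx
        exact ihA p0 hp0 (x.1, l0) hl0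
      · rw [Function.update_of_ne h2, Function.update_of_ne h1] at hx
        exact ihA p0 hp0 x hx
    · intro p0 hp0 hne
      have h1 : p0 ≠ s := fun he => hp0 (he ▸ hs)
      by_cases h2 : p0 = p
      · subst h2
        rw [Function.update_self] at hne
        obtain ⟨x, hx⟩ := hne
        obtain ⟨lx, hlx⟩ := fsync_fid hx
        obtain ⟨s0, hs0, ⟨l0, hl0⟩, ⟨l', hl'⟩⟩ := ihB p0 hp0 ⟨_, hlx⟩
        have hs0p : s0 ≠ p0 := fun he => hp0 (he ▸ hs0)
        refine ⟨s0, hs0, ?_, ?_⟩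
        · rw [Function.update_self]
          exact fsync_exists _ _ _ _ hl0
        · rw [Function.update_of_ne hs0p]
          by_cases h3 : s0 = s
          · subst h3
            rw [Function.update_self]
            exact fserverSync_exists _ _ _ _ _ _ hl'
          · rw [Function.update_of_ne h3]
            exact ⟨l', hl'⟩
      · rw [Function.update_of_ne h2, Function.update_of_ne h1] at hne
        obtain ⟨s0, hs0, ⟨l0, hl0⟩, ⟨l', hl'⟩⟩ := ihB p0 hp0 hne
        have hs0p : s0 ≠ p := fun he => hp (he ▸ hs0)
        refine ⟨s0, hs0, ⟨l0, ?_⟩, ?_⟩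
        · rw [Function.update_of_ne h2, Function.update_of_ne h1]
          exact hl0
        · rw [Function.update_of_ne hs0p]
          by_cases h3 : s0 = s
          · subst h3
            rw [Function.update_self]
            exact fserverSync_exists _ _ _ _ _ _ hl'
          · rw [Function.update_of_ne h3]
            exact ⟨l', hl'⟩
  | syncSS s1 s2 h1 h2 hne12 =>
    constructor
    · intro p0 hp0 x hx
      have g1 : p0 ≠ s1 := fun he => hp0 (he ▸ h1)
      have g2 : p0 ≠ s2 := fun he => hp0 (he ▸ h2)
      rw [Function.update_of_ne g2, Function.update_of_ne g1] at hx
      exact ihA p0 hp0 x hx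
    · intro p0 hp0 hne
      have g1 : p0 ≠ s1 := fun he => hp0 (he ▸ h1)
      have g2 : p0 ≠ s2 := fun he => hp0 (he ▸ h2)
      rw [Function.update_of_ne g2, Function.update_of_ne g1] at hne
      obtain ⟨s0, hs0, ⟨l0, hl0⟩, ⟨l', hl'⟩⟩ := ihB p0 hp0 hne
      refine ⟨s0, hs0, ⟨l0, ?_⟩, ?_⟩
      · rw [Function.update_of_ne g2, Function.update_of_ne g1]
        exact hl0
      · by_cases e2 : s0 = s2
        · subst e2
          rw [Function.update_self]
          exact fssSync_exists _ _ _ _ _ _ hl'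
        · rw [Function.update_of_ne e2]
          by_cases e1 : s0 = s1
          · subst e1
            rw [Function.update_self]
            exact fssSync_exists _ _ _ _ _ _ hl'
          · rw [Function.update_of_ne e1]
            exact ⟨l', hl'⟩

end Aux

/-- In the federated social network protocol, in every reachable
configuration every feed identifier recorded at any client `p` is of the form
`(a@s, posts)` with `s` a server; and once a client `p` is registered (its state is
nonempty), its own identifier `p@s` for its home server `s` is recorded at both `p`
and `s`. -/
theorem federated_feed_ids {Agent M : Type*} [DecidableEq Agent]
    (SV : Set Agent) (c : FConf Agent M) (h : FReachable SV c) :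
    (∀ p : Agent, p ∉ SV → ∀ x ∈ c p, x.1.2 ∈ SV) ∧
    (∀ p : Agent, p ∉ SV → (c p).Nonempty →
      ∃ s ∈ SV, (∃ l : List M, ((p, s), l) ∈ c p) ∧
        ∃ l' : List M, ((p, s), l') ∈ c s) := by
  have h' : Relation.ReflTransGen (FStep SV)
      (fun _ => (∅ : Set ((Agent × Agent) × List M))) c := h
  clear h
  induction h' with
  | refl =>
    exact ⟨fun p _ x hx => absurd hx (Set.notMem_empty x),
      fun p _ hne => absurd hne (by simp)⟩
  | tail hsteps hstep ih =>
    obtain ⟨ihA, ihB⟩ := ih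
    exact finv_step SV _ _ hstep ihA ihB
end

section
/- In the centralised social network protocol with fairness (every pair consisting of a registered user and the server Syncs infinitely often in any infinite run), if user p follows user q and q has posted message m, then eventually m appears in p's record of q's posts. -/
/-- A step that is a Sync between user `q` and the server `p0`. -/
def CSyncStep {Agent M : Type*} [DecidableEq Agent] (p0 : Agent)
    (c c' : CConf Agent M) (q : Agent) : Prop :=
  q ≠ p0 ∧ (∃ s : List M, (q, s) ∈ c p0) ∧
    c' = Function.update (Function.update c p0 (csyncServer q (c p0) (c q))) q
      (gsync (c q) (csyncServer q (c p0) (c q)))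

section Aux

variable {Agent M : Type*} [DecidableEq Agent] {p0 : Agent}

private lemma pair_fst {α β : Type*} {x y : α} {s t : β} (h : (x, s) = (y, t)) : x = y := by
  injection h

private lemma pair_snd {α β : Type*} {x y : α} {s t : β} (h : (x, s) = (y, t)) : s = t := by
  injection h

private lemma pfx_total {l₁ l₂ l₃ : List M} (h1 : l₁ <+: l₃) (h2 : l₂ <+: l₃) :
    l₁ <+: l₂ ∨ l₂ <+: l₁ := by
  obtain ⟨t1, rfl⟩ := h1
  obtain ⟨t2, e⟩ := h2
  rcases List.append_eq_append_iff.1 e with ⟨a', rfl, -⟩ | ⟨c', rfl, -⟩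
  · exact Or.inr ⟨a', rfl⟩
  · exact Or.inl ⟨c', rfl⟩

private lemma mem_csyncServer_elim {q : Agent} {Ss Sq : Set (Agent × List M)}
    {x : Agent × List M} (h : x ∈ csyncServer q Ss Sq) : x ∈ Ss ∨ (x.1 = q ∧ x ∈ Sq) := by
  rcases h with ⟨h, -⟩ | ⟨h1, h2, -⟩
  · exact Or.inl h
  · exact Or.inr ⟨h1, h2⟩

private lemma mem_gsync_elim {Sp Sq : Set (Agent × List M)}
    {x : Agent × List M} (h : x ∈ gsync Sp Sq) : x ∈ Sp ∨ x ∈ Sq := by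
  rcases h with ⟨h, -⟩ | ⟨h, -⟩
  · exact Or.inl h
  · exact Or.inr h

/-- The inductive invariant of the centralised protocol. -/
structure CInv_s18 (p0 : Agent) (c : CConf Agent M) : Prop where
  uni : ∀ a b (s t : List M), (b, s) ∈ c a → (b, t) ∈ c a → s = t
  pre : ∀ a b (t : List M), (b, t) ∈ c a → t = [] ∨ ∃ s : List M, (b, s) ∈ c b ∧ t <+: s
  reg : ∀ b, b ≠ p0 → (c b).Nonempty → ∃ t : List M, (b, t) ∈ c p0
  rs : ∀ b (t : List M), (b, t) ∈ c p0 → b ≠ p0 ∧ (c b).Nonempty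

private lemma CInv_s18.self {c : CConf Agent M} (hc : CInv_s18 p0 c) {a b : Agent}
    {s t : List M} (hs : (b, s) ∈ c b) (ht : (b, t) ∈ c a) : t <+: s := by
  rcases hc.pre a b t ht with rfl | ⟨s', hs', hp⟩
  · exact List.nil_prefix
  · rwa [hc.uni b b s' s hs' hs] at hp

private lemma CInv_s18.cmp {c : CConf Agent M} (hc : CInv_s18 p0 c) {a a' b : Agent}
    {s t : List M} (hs : (b, s) ∈ c a) (ht : (b, t) ∈ c a') : s <+: t ∨ t <+: s := by
  rcases hc.pre a b s hs with rfl | ⟨u, hu, hsu⟩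
  · exact Or.inl (List.nil_prefix)
  rcases hc.pre a' b t ht with rfl | ⟨u', hu', htu⟩
  · exact Or.inr (List.nil_prefix)
  rw [hc.uni b b u' u hu' hu] at htu
  exact pfx_total hsu htu

private lemma sync_mono_q {c : CConf Agent M} (hc : CInv_s18 p0 c) (q : Agent)
    {b : Agent} {s : List M} (h : (b, s) ∈ c q) :
    ∃ s' : List M, (b, s') ∈ gsync (c q) (csyncServer q (c p0) (c q)) ∧ s <+: s' := by
  set Sv := csyncServer q (c p0) (c q) with hSv
  by_cases hcond : ∀ s' : List M, (b, s') ∈ Sv → ¬ (s.length < s'.length)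
  · exact ⟨s, Or.inl ⟨h, hcond⟩, List.prefix_rfl⟩
  · push_neg at hcond
    obtain ⟨s', hs', hl⟩ := hcond
    refine ⟨s', Or.inr ⟨hs', s, h, hl⟩, ?_⟩
    have hmem := mem_csyncServer_elim hs'
    have hcmp : s <+: s' ∨ s' <+: s := by
      rcases hmem with h' | ⟨-, h'⟩
      · exact hc.cmp h h'
      · exact hc.cmp h h'
    rcases hcmp with h' | h'
    · exact h'
    · exact absurd h'.length_le (by omega)

private lemma sync_mono_server {c : CConf Agent M} (hc : CInv_s18 p0 c) (q : Agent)
    {b : Agent} {s : List M} (h : (b, s) ∈ c p0) :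
    ∃ s' : List M, (b, s') ∈ csyncServer q (c p0) (c q) ∧ s <+: s' := by
  by_cases hcond : b = q → ∀ s' : List M, (q, s') ∈ c q → ¬ (s.length < s'.length)
  · exact ⟨s, Or.inl ⟨h, hcond⟩, List.prefix_rfl⟩
  · push_neg at hcond
    obtain ⟨rfl, s', hs', hl⟩ := hcond
    refine ⟨s', Or.inr ⟨rfl, hs', s, h, hl⟩, ?_⟩
    rcases hc.cmp h hs' with h' | h'
    · exact h'
    · exact absurd h'.length_le (by omega)

private lemma step_mono {c c' : CConf Agent M} (hc : CInv_s18 p0 c) (hstep : CStep p0 c c') :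
    ∀ a b (s : List M), (b, s) ∈ c a → ∃ s' : List M, (b, s') ∈ c' a ∧ s <+: s' := by
  intro a b s hmem
  cases hstep with
  | register q hqp h =>
    rcases eq_or_ne a p0 with rfl | hap
    · refine ⟨s, ?_, List.prefix_rfl⟩
      rw [Function.update_self]
      exact Or.inl hmem
    rcases eq_or_ne a q with rfl | haq
    · rw [h] at hmem; exact absurd hmem (Set.notMem_empty _)
    · refine ⟨s, ?_, List.prefix_rfl⟩
      rw [Function.update_of_ne hap, Function.update_of_ne haq]
      exact hmem
  | post q hqp m0 s0 h =>
    rcases eq_or_ne a q with rfl | haq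
    · by_cases he : (b, s) = (a, s0)
      · obtain ⟨hb, hs⟩ := Prod.ext_iff.1 he
        subst hb; subst hs
        refine ⟨s ++ [m0], ?_, ⟨[m0], rfl⟩⟩
        rw [Function.update_self]
        exact Or.inr rfl
      · refine ⟨s, ?_, List.prefix_rfl⟩
        rw [Function.update_self]
        exact Or.inl ⟨hmem, he⟩
    · refine ⟨s, ?_, List.prefix_rfl⟩
      rw [Function.update_of_ne haq]
      exact hmem
  | follow q q' hqp hne h =>
    rcases eq_or_ne a q with rfl | haq
    · refine ⟨s, ?_, List.prefix_rfl⟩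
      rw [Function.update_self]
      exact Or.inl hmem
    · refine ⟨s, ?_, List.prefix_rfl⟩
      rw [Function.update_of_ne haq]
      exact hmem
  | sync q hqp hreg =>
    rcases eq_or_ne a q with rfl | haq
    · obtain ⟨s', hs', hp⟩ := sync_mono_q hc a hmem
      refine ⟨s', ?_, hp⟩
      rw [Function.update_self]
      exact hs'
    rcases eq_or_ne a p0 with rfl | hap
    · obtain ⟨s', hs', hp⟩ := sync_mono_server hc q hmem
      refine ⟨s', ?_, hp⟩
      rw [Function.update_of_ne (Ne.symm hqp), Function.update_self]
      exact hs'
    · refine ⟨s, ?_, List.prefix_rfl⟩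
      rw [Function.update_of_ne haq, Function.update_of_ne hap]
      exact hmem

private lemma CInv_s18.step {c c' : CConf Agent M} (hc : CInv_s18 p0 c) (hstep : CStep p0 c c') :
    CInv_s18 p0 c' := by
  have hmono := step_mono hc hstep
  have hne : ∀ b, (c b).Nonempty → (c' b).Nonempty := by
    rintro b ⟨⟨b', s⟩, hx⟩
    obtain ⟨s', hs', -⟩ := hmono b b' s hx
    exact ⟨(b', s'), hs'⟩
  have hpre_old : ∀ a₀ b (t : List M), (b, t) ∈ c a₀ →
      t = [] ∨ ∃ s : List M, (b, s) ∈ c' b ∧ t <+: s := by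
    intro a₀ b t h₀
    rcases hc.pre a₀ b t h₀ with rfl | ⟨s, hs, hp⟩
    · exact Or.inl rfl
    · obtain ⟨s', hs', hss'⟩ := hmono b b s hs
      exact Or.inr ⟨s', hs', hp.trans hss'⟩
  cases hstep with
  | register q hqp h =>
    constructor
    · intro a b s t hs ht
      rcases eq_or_ne p0 a with rfl | hap
      · rw [Function.update_self] at hs ht
        rcases hs with hs | hs <;> rcases ht with ht | ht
        · exact hc.uni p0 b s t hs ht
        · have h2 : (b, t) = (q, []) := ht
          exact absurd (hc.rs b s hs).2
            (by rw [(pair_fst h2), h]; exact Set.not_nonempty_empty)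
        · have h2 : (b, s) = (q, []) := hs
          exact absurd (hc.rs b t ht).2
            (by rw [(pair_fst h2), h]; exact Set.not_nonempty_empty)
        · have h1 : (b, s) = (q, []) := hs
          have h2 : (b, t) = (q, []) := ht
          rw [(pair_snd h1), (pair_snd h2)]
      rcases eq_or_ne q a with rfl | haq
      · rw [Function.update_of_ne (Ne.symm hap), Function.update_self] at hs ht
        have h1 : (b, s) = (q, []) := hs
        have h2 : (b, t) = (q, []) := ht
        rw [(pair_snd h1), (pair_snd h2)]
      · rw [Function.update_of_ne (Ne.symm hap), Function.update_of_ne (Ne.symm haq)]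
          at hs ht
        exact hc.uni a b s t hs ht
    · intro a b t ht
      rcases eq_or_ne p0 a with rfl | hap
      · rw [Function.update_self] at ht
        rcases ht with ht | ht
        · exact hpre_old p0 b t ht
        · have h2 : (b, t) = (q, []) := ht
          exact Or.inl (pair_snd h2)
      rcases eq_or_ne q a with rfl | haq
      · rw [Function.update_of_ne (Ne.symm hap), Function.update_self] at ht
        have h2 : (b, t) = (q, []) := ht
        exact Or.inl (pair_snd h2)
      · rw [Function.update_of_ne (Ne.symm hap), Function.update_of_ne (Ne.symm haq)]
          at ht
        exact hpre_old a b t ht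
    · intro b hb hbne
      rcases eq_or_ne q b with rfl | hbq
      · exact ⟨[], by rw [Function.update_self]; exact Or.inr rfl⟩
      · have hcb : (c b).Nonempty := by
          rwa [Function.update_of_ne hb, Function.update_of_ne (Ne.symm hbq)] at hbne
        obtain ⟨t, ht⟩ := hc.reg b hb hcb
        exact ⟨t, by rw [Function.update_self]; exact Or.inl ht⟩
    · intro b t hbt
      rw [Function.update_self] at hbt
      rcases hbt with hbt | hbt
      · obtain ⟨h1, h2⟩ := hc.rs b t hbt
        exact ⟨h1, hne b h2⟩
      · have h2 : (b, t) = (q, []) := hbt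
        have hb := pair_fst h2
        refine ⟨?_, ?_⟩
        · rw [hb]; exact hqp
        · rw [hb, Function.update_of_ne hqp, Function.update_self]
          exact ⟨(q, []), rfl⟩
  | post q hqp m0 s0 h =>
    constructor
    · intro a b s t hs ht
      rcases eq_or_ne q a with rfl | haq
      · rw [Function.update_self] at hs ht
        rcases hs with ⟨hs1, hs2⟩ | hs <;> rcases ht with ⟨ht1, ht2⟩ | ht
        · exact hc.uni q b s t hs1 ht1
        · have he : (b, t) = (q, s0 ++ [m0]) := ht
          have hb := pair_fst he
          rw [hb] at hs1
          exact absurd (show (b, s) ∈ ({(q, s0)} : Set (Agent × List M)) by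
            rw [hb, hc.uni q q s s0 hs1 h]; rfl) hs2
        · have he : (b, s) = (q, s0 ++ [m0]) := hs
          have hb := pair_fst he
          rw [hb] at ht1
          exact absurd (show (b, t) ∈ ({(q, s0)} : Set (Agent × List M)) by
            rw [hb, hc.uni q q t s0 ht1 h]; rfl) ht2
        · have h1 : (b, s) = (q, s0 ++ [m0]) := hs
          have h2 : (b, t) = (q, s0 ++ [m0]) := ht
          rw [(pair_snd h1), (pair_snd h2)]
      · rw [Function.update_of_ne (Ne.symm haq)] at hs ht
        exact hc.uni a b s t hs ht
    · intro a b t ht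
      rcases eq_or_ne q a with rfl | haq
      · rw [Function.update_self] at ht
        rcases ht with ⟨ht1, -⟩ | ht
        · exact hpre_old q b t ht1
        · have he : (b, t) = (q, s0 ++ [m0]) := ht
          refine Or.inr ⟨s0 ++ [m0], ?_, ?_⟩
          · rw [(pair_fst he), Function.update_self]
            exact Or.inr rfl
          · rw [(pair_snd he)]
      · rw [Function.update_of_ne (Ne.symm haq)] at ht
        exact hpre_old a b t ht
    · intro b hb hbne
      have hcb : (c b).Nonempty := by
        rcases eq_or_ne q b with rfl | hbq
        · exact ⟨_, h⟩
        · rwa [Function.update_of_ne (Ne.symm hbq)] at hbne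
      obtain ⟨t, ht⟩ := hc.reg b hb hcb
      exact ⟨t, by rw [Function.update_of_ne (Ne.symm hqp)]; exact ht⟩
    · intro b t hbt
      rw [Function.update_of_ne (Ne.symm hqp)] at hbt
      obtain ⟨h1, h2⟩ := hc.rs b t hbt
      exact ⟨h1, hne b h2⟩
  | follow q q' hqp hne2 h =>
    constructor
    · intro a b s t hs ht
      rcases eq_or_ne q a with rfl | haq
      · rw [Function.update_self] at hs ht
        rcases hs with hs | hs <;> rcases ht with ht | ht
        · exact hc.uni q b s t hs ht
        · have he : (b, t) = (q', []) := ht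
          rw [(pair_fst he)] at hs
          exact absurd hs (h s)
        · have he : (b, s) = (q', []) := hs
          rw [(pair_fst he)] at ht
          exact absurd ht (h t)
        · have h1 : (b, s) = (q', []) := hs
          have h2 : (b, t) = (q', []) := ht
          rw [(pair_snd h1), (pair_snd h2)]
      · rw [Function.update_of_ne (Ne.symm haq)] at hs ht
        exact hc.uni a b s t hs ht
    · intro a b t ht
      rcases eq_or_ne q a with rfl | haq
      · rw [Function.update_self] at ht
        rcases ht with ht | ht
        · exact hpre_old q b t ht
        · have he : (b, t) = (q', []) := ht
          exact Or.inl (pair_snd he)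
      · rw [Function.update_of_ne (Ne.symm haq)] at ht
        exact hpre_old a b t ht
    · intro b hb hbne
      have hcb : (c b).Nonempty := by
        rcases eq_or_ne q b with rfl | hbq
        · exact Set.nonempty_iff_ne_empty.2 hne2
        · rwa [Function.update_of_ne (Ne.symm hbq)] at hbne
      obtain ⟨t, ht⟩ := hc.reg b hb hcb
      exact ⟨t, by rw [Function.update_of_ne (Ne.symm hqp)]; exact ht⟩
    · intro b t hbt
      rw [Function.update_of_ne (Ne.symm hqp)] at hbt
      obtain ⟨h1, h2⟩ := hc.rs b t hbt
      exact ⟨h1, hne b h2⟩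
  | sync q hqp hreg =>
    have uniSv : ∀ b (s t : List M), (b, s) ∈ csyncServer q (c p0) (c q) →
        (b, t) ∈ csyncServer q (c p0) (c q) → s = t := by
      intro b s t hs ht
      rcases hs with ⟨hs1, hs2⟩ | ⟨hb, hs1, s₂, hs₂, hl⟩ <;>
        rcases ht with ⟨ht1, ht2⟩ | ⟨hb', ht1, t₂, ht₂, hl'⟩
      · exact hc.uni p0 b s t hs1 ht1
      · have hb2 : b = q := hb'
        rw [hb2] at hs1 ht1
        rw [hc.uni p0 q t₂ s ht₂ hs1] at hl'
        exact absurd hl' (hs2 hb2 t ht1)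
      · have hb2 : b = q := hb
        rw [hb2] at ht1 hs1
        rw [hc.uni p0 q s₂ t hs₂ ht1] at hl
        exact absurd hl (ht2 hb2 s hs1)
      · exact hc.uni q b s t hs1 ht1
    have uniG : ∀ b (s t : List M), (b, s) ∈ gsync (c q) (csyncServer q (c p0) (c q)) →
        (b, t) ∈ gsync (c q) (csyncServer q (c p0) (c q)) → s = t := by
      intro b s t hs ht
      rcases hs with ⟨hs1, hs2⟩ | ⟨hs1, s₂, hs₂, hl⟩ <;>
        rcases ht with ⟨ht1, ht2⟩ | ⟨ht1, t₂, ht₂, hl'⟩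
      · exact hc.uni q b s t hs1 ht1
      · rw [hc.uni q b t₂ s ht₂ hs1] at hl'
        exact absurd hl' (hs2 t ht1)
      · rw [hc.uni q b s₂ t hs₂ ht1] at hl
        exact absurd hl (ht2 s hs1)
      · exact uniSv b s t hs1 ht1
    constructor
    · intro a b s t hs ht
      rcases eq_or_ne q a with rfl | haq
      · rw [Function.update_self] at hs ht
        exact uniG b s t hs ht
      rcases eq_or_ne p0 a with rfl | hap
      · rw [Function.update_of_ne (Ne.symm hqp), Function.update_self] at hs ht
        exact uniSv b s t hs ht
      · rw [Function.update_of_ne (Ne.symm haq), Function.update_of_ne (Ne.symm hap)]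
          at hs ht
        exact hc.uni a b s t hs ht
    · intro a b t ht
      rcases eq_or_ne q a with rfl | haq
      · rw [Function.update_self] at ht
        rcases mem_gsync_elim ht with h' | h'
        · exact hpre_old q b t h'
        · rcases mem_csyncServer_elim h' with h'' | ⟨-, h''⟩
          · exact hpre_old p0 b t h''
          · exact hpre_old q b t h''
      rcases eq_or_ne p0 a with rfl | hap
      · rw [Function.update_of_ne (Ne.symm hqp), Function.update_self] at ht
        rcases mem_csyncServer_elim ht with h'' | ⟨-, h''⟩
        · exact hpre_old p0 b t h''
        · exact hpre_old q b t h''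
      · rw [Function.update_of_ne (Ne.symm haq), Function.update_of_ne (Ne.symm hap)]
          at ht
        exact hpre_old a b t ht
    · intro b hb hbne
      rcases eq_or_ne q b with rfl | hbq
      · obtain ⟨t0, ht0⟩ := hreg
        obtain ⟨t', ht', -⟩ := sync_mono_server hc q ht0
        refine ⟨t', ?_⟩
        rw [Function.update_of_ne (Ne.symm hqp), Function.update_self]
        exact ht'
      · have hcb : (c b).Nonempty := by
          rwa [Function.update_of_ne (Ne.symm hbq), Function.update_of_ne hb] at hbne
        obtain ⟨t, ht⟩ := hc.reg b hb hcb
        obtain ⟨t', ht', -⟩ := sync_mono_server hc q ht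
        refine ⟨t', ?_⟩
        rw [Function.update_of_ne (Ne.symm hqp), Function.update_self]
        exact ht'
    · intro b t hbt
      rw [Function.update_of_ne (Ne.symm hqp), Function.update_self] at hbt
      rcases mem_csyncServer_elim hbt with h' | ⟨hb, h'⟩
      · obtain ⟨h1, h2⟩ := hc.rs b t h'
        exact ⟨h1, hne b h2⟩
      · have hb' : b = q := hb
        refine ⟨?_, hne b ?_⟩
        · rw [hb']; exact hqp
        · rw [hb']; exact ⟨_, h'⟩

/-- After a Sync between `q` and the server, the server's record of `q` extends
`q`'s own previous record. -/
private lemma syncT1 {c c' : CConf Agent M} {q : Agent} (hc : CInv_s18 p0 c)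
    (hs : CSyncStep p0 c c' q) {s : List M} (h : (q, s) ∈ c q) :
    ∃ u : List M, (q, u) ∈ c' p0 ∧ s <+: u := by
  obtain ⟨hq, ⟨t0, ht0⟩, heq⟩ := hs
  have hcp0 : c' p0 = csyncServer q (c p0) (c q) := by
    rw [heq, Function.update_of_ne hq.symm, Function.update_self]
  rw [hcp0]
  by_cases hcond : ∀ s' : List M, (q, s') ∈ c q → ¬ (t0.length < s'.length)
  · have hle : s.length ≤ t0.length := not_lt.1 (hcond s h)
    have hpfx : t0 <+: s := hc.self h ht0
    have : t0 = s := hpfx.eq_of_length (le_antisymm hpfx.length_le hle)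
    exact ⟨t0, Or.inl ⟨ht0, fun _ => hcond⟩, this ▸ List.prefix_rfl⟩
  · push_neg at hcond
    obtain ⟨s', hs', hl⟩ := hcond
    rw [hc.uni q q s' s hs' h] at hl
    exact ⟨s, Or.inr ⟨rfl, h, t0, ht0, hl⟩, List.prefix_rfl⟩

/-- After a Sync between `p` and the server, `p`'s record of `q ≠ p` extends the
server's previous record of `q`, provided `p` already had a record of `q`. -/
private lemma syncT2 {c c' : CConf Agent M} {p q : Agent} (hc : CInv_s18 p0 c)
    (hs : CSyncStep p0 c c' p) (hqp : q ≠ p) {u t : List M}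
    (hu : (q, u) ∈ c p0) (ht : (q, t) ∈ c p) :
    ∃ t' : List M, (q, t') ∈ c' p ∧ u <+: t' := by
  obtain ⟨hp, -, heq⟩ := hs
  have hcp : c' p = gsync (c p) (csyncServer p (c p0) (c p)) := by
    rw [heq, Function.update_self]
  rw [hcp]
  have huSv : (q, u) ∈ csyncServer p (c p0) (c p) :=
    Or.inl ⟨hu, fun h' => absurd h' hqp⟩
  by_cases hcond : ∀ s' : List M, (q, s') ∈ csyncServer p (c p0) (c p) →
      ¬ (t.length < s'.length)
  · have hle : u.length ≤ t.length := not_lt.1 (hcond u huSv)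
    have hut : u <+: t := by
      rcases hc.cmp hu ht with h' | h'
      · exact h'
      · exact (h'.eq_of_length (le_antisymm h'.length_le hle)) ▸ List.prefix_rfl
    exact ⟨t, Or.inl ⟨ht, hcond⟩, hut⟩
  · push_neg at hcond
    obtain ⟨s', hs', hl⟩ := hcond
    refine ⟨s', Or.inr ⟨hs', t, ht, hl⟩, ?_⟩
    rcases mem_csyncServer_elim hs' with h' | ⟨h1, -⟩
    · exact (hc.uni p0 q u s' hu h') ▸ List.prefix_rfl
    · exact absurd h1 hqp

end Aux

/-- liveness of Follower Correctness, centralised: with the fairness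
requirement that every registered user Syncs with the server infinitely often, if
user `p` follows user `q` and `q` has posted message `m`, then eventually `m`
appears in `p`'s record of `q`'s posts. -/
theorem centralised_liveness {Agent M : Type*} [DecidableEq Agent]
    (p0 : Agent) (ρ : ℕ → CConf Agent M)
    (h0 : ρ 0 = fun _ => (∅ : Set (Agent × List M)))
    (hstep : ∀ n, CStep p0 (ρ n) (ρ (n + 1)))
    (hfair : ∀ n (q : Agent), q ≠ p0 → (∃ s : List M, (q, s) ∈ ρ n p0) →
      ∃ k, n ≤ k ∧ CSyncStep p0 (ρ k) (ρ (k + 1)) q)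
    (p q : Agent) (hp : p ≠ p0) (hq : q ≠ p0) (hpq : p ≠ q) (n : ℕ) (m : M)
    (hfollow : ∃ s : List M, (q, s) ∈ ρ n p)
    (hposted : ∃ s : List M, (q, s) ∈ ρ n q ∧ m ∈ s) :
    ∃ k : ℕ, ∃ s' : List M, (q, s') ∈ ρ k p ∧ m ∈ s' := by
  -- the invariant holds along the run
  have hinv : ∀ k, CInv_s18 p0 (ρ k) := by
    intro k
    induction k with
    | zero =>
      rw [h0]
      exact ⟨fun a b s t hs _ => absurd hs (Set.notMem_empty _),
        fun a b t ht => absurd ht (Set.notMem_empty _),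
        fun b _ hne => absurd hne (Set.not_nonempty_empty),
        fun b t ht => absurd ht (Set.notMem_empty _)⟩
    | succ k ih => exact ih.step (hstep k)
  -- iterated record monotonicity along the run
  have hrun : ∀ (a b : Agent) (s : List M) (n' k : ℕ), n' ≤ k → (b, s) ∈ ρ n' a →
      ∃ s' : List M, (b, s') ∈ ρ k a ∧ s <+: s' := by
    intro a b s n' k hnk hmem
    induction k, hnk using Nat.le_induction with
    | base => exact ⟨s, hmem, List.prefix_rfl⟩
    | succ k _ ih =>
      obtain ⟨s', hs', h1⟩ := ih
      obtain ⟨s'', hs'', h2⟩ := step_mono (hinv k) (hstep k) a b s' hs'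
      exact ⟨s'', hs'', h1.trans h2⟩
  obtain ⟨sq, hsq, hm⟩ := hposted
  obtain ⟨sp, hsp⟩ := hfollow
  -- q is registered at time n, so it syncs at some time k ≥ n
  obtain ⟨k, hnk, hsync_q⟩ := hfair n q hq ((hinv n).reg q hq ⟨_, hsq⟩)
  -- q's own record at time k still contains m
  obtain ⟨sq', hsq', hpre1⟩ := hrun q q sq n k hnk hsq
  -- after the sync, the server's record of q contains m
  obtain ⟨u, hu, hpre2⟩ := syncT1 (hinv k) hsync_q hsq'
  -- p is registered at time n, hence at time k+1, so it syncs at some k' ≥ k+1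
  obtain ⟨t0, ht0⟩ := (hinv n).reg p hp ⟨_, hsp⟩
  obtain ⟨t0', ht0', -⟩ := hrun p0 p t0 n (k + 1) (by omega) ht0
  obtain ⟨k', hk', hsync_p⟩ := hfair (k + 1) p hp ⟨t0', ht0'⟩
  -- the server's record of q at time k' still contains m
  obtain ⟨u', hu', hpre3⟩ := hrun p0 q u (k + 1) k' hk' hu
  -- p still has a record of q at time k'
  obtain ⟨t, ht, -⟩ := hrun p q sp n k' (by omega) hsp
  -- after p's sync, p's record of q contains m
  obtain ⟨t', ht', hpre4⟩ := syncT2 (hinv k') hsync_p (Ne.symm hpq) hu' ht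
  exact ⟨k' + 1, t', ht', hpre4.subset (hpre3.subset (hpre2.subset (hpre1.subset hm)))⟩
end
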